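/- arXiv:2305.02512 — 7 statements merged into one kernel-verified Lean document; each statement's English description precedes it below -/
import Mathlib

section
/- Let F be a field and m ≥ 1. For all square matrices M₁, M₂, M₃ ∈ F^{m×m}: if rank(M₂ − M₁) + rank(M₁) = rank(M₂) and rank(M₃ − M₂) + rank(M₂) = rank(M₃), then rank(M₃ − M₁) + rank(M₁) = rank(M₃). In other words, the domination relation M ⪯ M' on square matrices is transitive (this is the key step showing that the matrix poset is a well-defined poset). -/
lemma matrix_rank_add_le {F : Type*} [Field F] {m : ℕ}
    (A B : Matrix (Fin m) (Fin m) F) : (A + B).rank ≤ A.rank + B.rank := by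
  simp only [Matrix.rank]
  have hle : LinearMap.range (A + B).mulVecLin ≤
      LinearMap.range A.mulVecLin ⊔ LinearMap.range B.mulVecLin := by
    rw [Matrix.mulVecLin_add]
    rintro _ ⟨x, rfl⟩
    exact Submodule.add_mem_sup ⟨x, rfl⟩ ⟨x, rfl⟩
  exact (Submodule.finrank_mono hle).trans
    (Submodule.finrank_add_le_finrank_add_finrank _ _)

/-- For square matrices over a field, the domination relation
`M ⪯ M'` defined by `rank(M' − M) + rank(M) = rank(M')` is transitive. -/
theorem stmt0 (F : Type*) [Field F] (m : ℕ) (hm : 1 ≤ m)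
    (M₁ M₂ M₃ : Matrix (Fin m) (Fin m) F)
    (h12 : (M₂ - M₁).rank + M₁.rank = M₂.rank)
    (h23 : (M₃ - M₂).rank + M₂.rank = M₃.rank) :
    (M₃ - M₁).rank + M₁.rank = M₃.rank := by
  have e1 : M₃ - M₁ = (M₃ - M₂) + (M₂ - M₁) := by abel
  have e2 : M₃ = (M₃ - M₁) + M₁ := by abel
  apply le_antisymm
  · calc (M₃ - M₁).rank + M₁.rank
        = ((M₃ - M₂) + (M₂ - M₁)).rank + M₁.rank := by rw [← e1]
      _ ≤ ((M₃ - M₂).rank + (M₂ - M₁).rank) + M₁.rank := by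
          gcongr; exact matrix_rank_add_le _ _
      _ = (M₃ - M₂).rank + ((M₂ - M₁).rank + M₁.rank) := by ring
      _ = M₃.rank := by rw [h12, h23]
  · calc M₃.rank = ((M₃ - M₁) + M₁).rank := by rw [← e2]
      _ ≤ (M₃ - M₁).rank + M₁.rank := matrix_rank_add_le _ _
end

section
/- Let F be a field, m ≥ 1, and let M₁, M₂ ∈ F^{m×m} satisfy rank(M₂ − M₁) + rank(M₁) = rank(M₂) and rank(M₂) ≥ rank(M₁) + 2. Then there exists M' ∈ F^{m×m} with rank(M') = rank(M₁) + 1, rank(M' − M₁) = 1, and rank(M₂ − M') + rank(M') = rank(M₂); that is, M₁ ≺ M' ≺ M₂. (This shows the matrix poset is graded by matrix rank: covering relations raise rank by exactly one.) -/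
/-! Put `D = M₂ - M₁`. Wedderburn's rank-one reduction yields a rank-one `R` with
`rank (D - R) = rank D - 1`, so `M₂ = M₁ + R + (D - R)` has rank equal to the sum of the
ranks of its three summands. Subadditivity of rank then forces `M' = M₁ + R` to have rank
`rank M₁ + 1` and to be dominated by `M₂`. -/

open Matrix

namespace Matrix

variable {m n K : Type*} [Fintype n] [Field K]

theorem rank_add_le (A B : Matrix m n K) : (A + B).rank ≤ A.rank + B.rank := by
  rw [rank, rank, rank, mulVecLin_add]
  exact (Submodule.finrank_mono (LinearMap.range_add_le _ _)).trans
    (Submodule.finrank_add_le_finrank_add_finrank _ _)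

theorem rank_add_eq_of_rank_add_add_eq {A B C : Matrix m n K}
    (h : (A + B + C).rank = A.rank + B.rank + C.rank) : (A + B).rank = A.rank + B.rank := by
  have := rank_add_le A B
  have := rank_add_le (A + B) C
  omega

/- Subtracting `D.col j * D.row i / D i j` clears row `i` and stays inside the column space of
`D`, which contains the column `D.col j`, nonzero at `i`: so the column space shrinks. -/
theorem rank_sub_vecMulVec_col_row_add_one {D : Matrix m n K} {i : m} {j : n}
    (hij : D i j ≠ 0) : (D - vecMulVec (D.col j) ((D i j)⁻¹ • D.row i)).rank + 1 = D.rank := by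
  classical
  set R := vecMulVec (D.col j) ((D i j)⁻¹ • D.row i)
  have hR : ∀ x, R *ᵥ x = D *ᵥ Pi.single j ((D i j)⁻¹ • D.row i ⬝ᵥ x) := by
    intro x; rw [vecMulVec_mulVec, mulVec_single]
  have hrow_zero : ∀ x, ((D - R) *ᵥ x) i = 0 := by
    intro x
    rw [sub_mulVec, Pi.sub_apply, vecMulVec_mulVec]
    simp only [Pi.smul_apply, op_smul_eq_smul, smul_eq_mul, col_apply, smul_dotProduct]
    field_simp
    exact sub_self _
  have hrange : LinearMap.range (D - R).mulVecLin ≤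
      LinearMap.range D.mulVecLin ⊓ LinearMap.ker (LinearMap.proj i) := by
    rintro _ ⟨x, rfl⟩
    refine ⟨⟨x - Pi.single j ((D i j)⁻¹ • D.row i ⬝ᵥ x), ?_⟩, hrow_zero x⟩
    simp [mulVec_sub, hR]
  have hlt : LinearMap.range D.mulVecLin ⊓ LinearMap.ker (LinearMap.proj i) <
      LinearMap.range D.mulVecLin := by
    refine inf_lt_left.mpr fun hle => hij ?_
    simpa using hle ⟨Pi.single j 1, mulVec_single_one D j⟩
  have hlower : (D - R).rank < D.rank :=
    (Submodule.finrank_mono hrange).trans_lt (Submodule.finrank_lt_finrank_of_lt hlt)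
  have hupper : D.rank ≤ (D - R).rank + 1 := by
    simpa using (rank_add_le (D - R) R).trans (by gcongr; exact rank_vecMulVec_le _ _)
  omega

theorem exists_rank_eq_one_rank_sub_add_one {D : Matrix m n K} (hD : D ≠ 0) :
    ∃ R : Matrix m n K, R.rank = 1 ∧ (D - R).rank + 1 = D.rank := by
  obtain ⟨i, j, hij⟩ : ∃ i j, D i j ≠ 0 := by
    by_contra! h
    exact hD (ext h)
  set R := vecMulVec (D.col j) ((D i j)⁻¹ • D.row i)
  have hsplit : (D - R).rank + 1 = D.rank := rank_sub_vecMulVec_col_row_add_one hij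
  have hR_le : R.rank ≤ 1 := rank_vecMulVec_le _ _
  have hD_le := rank_add_le (D - R) R
  rw [sub_add_cancel] at hD_le
  exact ⟨R, by omega, hsplit⟩

end Matrix

theorem stmt1_general (F : Type*) [Field F] (m : ℕ)
    (M₁ M₂ : Matrix (Fin m) (Fin m) F)
    (hdom : (M₂ - M₁).rank + M₁.rank = M₂.rank)
    (hgap : M₁.rank + 2 ≤ M₂.rank) :
    ∃ M' : Matrix (Fin m) (Fin m) F,
      M'.rank = M₁.rank + 1 ∧ (M' - M₁).rank = 1 ∧
        (M₂ - M').rank + M'.rank = M₂.rank := by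
  have hD : M₂ - M₁ ≠ 0 := by
    intro h
    rw [h, rank_zero] at hdom
    omega
  obtain ⟨R, hR, hsplit⟩ := exists_rank_eq_one_rank_sub_add_one hD
  have hM' : (M₁ + R).rank = M₁.rank + R.rank := by
    apply rank_add_eq_of_rank_add_add_eq (C := M₂ - M₁ - R)
    rw [show M₁ + R + (M₂ - M₁ - R) = M₂ by abel]
    omega
  refine ⟨M₁ + R, by omega, by simpa using hR, ?_⟩
  rw [show M₂ - (M₁ + R) = M₂ - M₁ - R by abel]
  omega

/-- If `M₁ ⪯ M₂` and `rank(M₂) ≥ rank(M₁) + 2`, then there is an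
intermediate matrix `M'` with `M₁ ≺ M' ≺ M₂` and `rank(M') = rank(M₁) + 1`. -/
theorem stmt1 (F : Type*) [Field F] (m : ℕ) (hm : 1 ≤ m)
    (M₁ M₂ : Matrix (Fin m) (Fin m) F)
    (hdom : (M₂ - M₁).rank + M₁.rank = M₂.rank)
    (hgap : M₁.rank + 2 ≤ M₂.rank) :
    ∃ M' : Matrix (Fin m) (Fin m) F,
      M'.rank = M₁.rank + 1 ∧ (M' - M₁).rank = 1 ∧
        (M₂ - M').rank + M'.rank = M₂.rank :=
  stmt1_general F m M₁ M₂ hdom hgap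
end

section
/- Let r ≥ 1, b ≥ 1, n ≥ 2^{r+1} be integers and q = 2^b. Viewing the matrix space F_q^{n×n} as a vector space over F₂ (by restriction of scalars along F₂ ⊆ F_q), the F₂-linear span of the set {M ∈ F_q^{n×n} : rank(M) = 2^r} of rank-2^r matrices is the whole space F_q^{n×n}. -/
/-!
In characteristic `2` a matrix unit `E_pj(c)` with `p ≠ j` is the sum of `D` and `D + E_pj(c)`,
where `D` is a `0/1` diagonal matrix of rank `k` with `D_pp = 1`. Both have rank `k`, since
`D + E_pj(c) = D * (1 + E_pj(c))` and the transvection `1 + E_pj(c)` is invertible. Permuting the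
rows moves the unit to any position `(i, j)`, and the matrix units span everything additively.
-/

namespace Matrix

variable {m K : Type*} [Fintype m] [DecidableEq m] [Field K]

theorem diagonal_mul_transvection (d : m → K) (i j : m) (c : K) :
    diagonal d * transvection i j c = diagonal d + single i j (d i * c) := by
  rw [transvection, mul_add, mul_one, add_right_inj]
  ext x y
  by_cases hx : i = x <;> simp [single_apply, hx]

theorem rank_diagonal_add_single {i j : m} (hij : i ≠ j) (d : m → K) (c : K) :
    (diagonal d + single i j (d i * c)).rank = (diagonal d).rank := by
  rw [← diagonal_mul_transvection, rank_mul_eq_left_of_isUnit_det]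
  rw [det_transvection_of_ne _ _ hij]
  exact isUnit_one

theorem exists_apply_eq_one_and_rank_diagonal_eq {k : ℕ} (hk : 1 ≤ k) (hkm : k ≤ Fintype.card m)
    (i : m) :
    ∃ d : m → K, d i = 1 ∧ (diagonal d).rank = k := by
  classical
  obtain ⟨s, his, -, hs⟩ := Finset.exists_subsuperset_card_eq (Finset.subset_univ {i})
    (by simpa using hk) (by simpa using hkm)
  refine ⟨fun x => if x ∈ s then 1 else 0, by simp [Finset.singleton_subset_iff.mp his], ?_⟩
  simp [rank_diagonal, Fintype.card_subtype, hs]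

variable [CharP K 2] {k : ℕ}

theorem exists_rank_eq_add_eq_single_of_ne (hk : 1 ≤ k) (hkm : k ≤ Fintype.card m)
    {i j : m} (hij : i ≠ j) (c : K) :
    ∃ A B : Matrix m m K, A.rank = k ∧ B.rank = k ∧ A + B = single i j c := by
  obtain ⟨d, hd, hdk⟩ := exists_apply_eq_one_and_rank_diagonal_eq (K := K) hk hkm i
  have hA := rank_diagonal_add_single hij d c
  rw [hd, one_mul] at hA
  refine ⟨_, _, hA.trans hdk, hdk, ?_⟩
  rw [add_right_comm, diagonal_add,
    funext fun x => CharTwo.add_self_eq_zero (d x), diagonal_zero, zero_add]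

theorem exists_rank_eq_add_eq_single (hk : 1 ≤ k) (hkm : k ≤ Fintype.card m) [Nontrivial m]
    (i j : m) (c : K) :
    ∃ A B : Matrix m m K, A.rank = k ∧ B.rank = k ∧ A + B = single i j c := by
  obtain ⟨p, hpj⟩ := exists_ne j
  obtain ⟨A, B, hA, hB, hAB⟩ := exists_rank_eq_add_eq_single_of_ne hk hkm hpj c
  refine ⟨A.submatrix (Equiv.swap i p) id, B.submatrix (Equiv.swap i p) id,
    by simpa [hA] using rank_submatrix A (Equiv.swap i p) (Equiv.refl m),
    by simpa [hB] using rank_submatrix B (Equiv.swap i p) (Equiv.refl m), ?_⟩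
  change (A + B).submatrix (Equiv.swap i p) (Equiv.refl m) = _
  rw [hAB, submatrix_single_equiv]
  simp

theorem span_setOf_rank_eq_eq_top (S : Type*) [Semiring S] [Module S (Matrix m m K)]
    [Nontrivial m] (hk : 1 ≤ k) (hkm : k ≤ Fintype.card m) :
    Submodule.span S {M : Matrix m m K | M.rank = k} = ⊤ := by
  refine eq_top_iff.mpr fun M _ => ?_
  rw [matrix_eq_sum_single M]
  refine Submodule.sum_mem _ fun i _ => Submodule.sum_mem _ fun j _ => ?_
  obtain ⟨A, B, hA, hB, hAB⟩ := exists_rank_eq_add_eq_single hk hkm i j (M i j)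
  exact hAB ▸ add_mem (Submodule.subset_span hA) (Submodule.subset_span hB)

end Matrix

theorem stmt4_general (r b n : ℕ) (hn : 2 ^ (r + 1) ≤ n) :
    Submodule.span (ZMod 2)
      {M : Matrix (Fin n) (Fin n) (GaloisField 2 b) | M.rank = 2 ^ r} = ⊤ := by
  have : Nontrivial (Fin n) :=
    Fin.nontrivial_iff_two_le.mpr ((Nat.one_lt_two_pow_iff.mpr r.succ_ne_zero).trans_le hn)
  have hrn : 2 ^ r ≤ Fintype.card (Fin n) := by
    rw [Fintype.card_fin]
    exact (Nat.pow_lt_pow_succ one_lt_two).le.trans hn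
  exact Matrix.span_setOf_rank_eq_eq_top _ Nat.one_le_two_pow hrn

/-- For `q = 2^b`, the `F₂`-linear span of the set of rank-`2^r`
matrices in `F_q^{n×n}` (viewed as a vector space over `F₂ = ZMod 2` by restriction of
scalars) is the whole matrix space. -/
theorem stmt4 (r b n : ℕ) (hr : 1 ≤ r) (hb : 1 ≤ b) (hn : 2 ^ (r + 1) ≤ n) :
    Submodule.span (ZMod 2)
      {M : Matrix (Fin n) (Fin n) (GaloisField 2 b) | M.rank = 2 ^ r} = ⊤ :=
  stmt4_general r b n hn
end

section
/- Let V' be a finite set and V ⊆ V'. Let W : V×V → ℝ and W' : V'×V' → ℝ be symmetric matrices with nonnegative entries in which every row sums to 1 (symmetric random-walk matrices). Let ε ≥ 0 and λ' ≥ 0, and assume: (i) for every v ∈ V, Σ_{u ∈ V'} |Ŵ(v,u) − W'(v,u)| ≤ ε, where Ŵ(v,u) = W(v,u) if u ∈ V and Ŵ(v,u) = 0 otherwise; and (ii) for every g : V' → ℝ with Σ_{u ∈ V'} g(u) = 0, |Σ_{u,u' ∈ V'} g(u)·W'(u,u')·g(u')| ≤ λ'·Σ_{u ∈ V'} g(u)².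 Then for every f : V → ℝ with Σ_{v ∈ V} f(v) = 0, it holds that |Σ_{v,v' ∈ V} f(v)·W(v,v')·f(v')| ≤ (λ' + ε)·Σ_{v ∈ V} f(v)². (This expresses λ(W) ≤ λ(W') + ε for symmetric stochastic matrices, since for such matrices the spectral expansion equals the supremum of the Rayleigh quotient over vectors orthogonal to the constant vector.) -/
open Finset

/-- If `W` is a symmetric random-walk matrix on `V ⊆ V'`, `W'` is a
symmetric random-walk matrix on `V'`, every row of `W` (extended by zero) is `ε`-close in
`ℓ¹` to the corresponding row of `W'`, and `W'` has spectral expansion at most `λ'`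
(expressed via Rayleigh quotients over mean-zero vectors), then `W` has spectral
expansion at most `λ' + ε`. -/
theorem stmt5 {V' : Type*} [Fintype V'] [DecidableEq V'] (V : Finset V')
    (W W' : V' → V' → ℝ) (ε lam : ℝ) (hε : 0 ≤ ε) (hlam : 0 ≤ lam)
    (hWsymm : ∀ v ∈ V, ∀ u ∈ V, W v u = W u v)
    (hWnn : ∀ v ∈ V, ∀ u ∈ V, 0 ≤ W v u)
    (hWrow : ∀ v ∈ V, ∑ u ∈ V, W v u = 1)
    (hW'symm : ∀ v u : V', W' v u = W' u v)
    (hW'nn : ∀ v u : V', 0 ≤ W' v u)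
    (hW'row : ∀ v : V', ∑ u, W' v u = 1)
    (hclose : ∀ v ∈ V, ∑ u, |(if u ∈ V then W v u else 0) - W' v u| ≤ ε)
    (hexp : ∀ g : V' → ℝ, (∑ u, g u = 0) →
      |∑ u, ∑ u', g u * W' u u' * g u'| ≤ lam * ∑ u, (g u) ^ 2) :
    ∀ f : V' → ℝ, (∑ v ∈ V, f v = 0) →
      |∑ v ∈ V, ∑ v' ∈ V, f v * W v v' * f v'| ≤ (lam + ε) * ∑ v ∈ V, (f v) ^ 2 := by
  intro f hf
  classical
  set g : V' → ℝ := fun u => if u ∈ V then f u else 0 with hg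
  have hgsum : ∑ u, g u = 0 := by
    have : ∑ u, g u = ∑ u ∈ V, f u := by
      rw [show (∑ u, g u) = ∑ u ∈ Finset.univ, (if u ∈ V then f u else 0) from rfl,
        Finset.sum_ite_mem, Finset.univ_inter]
    rw [this, hf]
  have hgsq : ∑ u, (g u) ^ 2 = ∑ v ∈ V, (f v) ^ 2 := by
    have h : ∀ u, (g u) ^ 2 = if u ∈ V then (f u) ^ 2 else 0 := by
      intro u; by_cases h : u ∈ V <;> simp [g, h]
    rw [Finset.sum_congr rfl (fun u _ => h u), Finset.sum_ite_mem, Finset.univ_inter]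
  -- restrict double sums to V
  have h1 : ∀ (M : V' → V' → ℝ),
      ∑ u, ∑ u', g u * M u u' * g u' = ∑ v ∈ V, ∑ u ∈ V, f v * M v u * f u := by
    intro M
    rw [← Finset.sum_subset (Finset.subset_univ V)
      (fun x _ hx => by simp [g, hx])]
    refine Finset.sum_congr rfl fun v hv => ?_
    rw [← Finset.sum_subset (Finset.subset_univ V)
      (fun x _ hx => by simp [g, hx])]
    exact Finset.sum_congr rfl fun u hu => by simp [g, hv, hu]
  have hmain : |∑ v ∈ V, ∑ u ∈ V, f v * W' v u * f u| ≤ lam * ∑ v ∈ V, (f v) ^ 2 := by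
    rw [← h1 W', ← hgsq]
    exact hexp g hgsum
  -- row ℓ¹ bound on V
  have hrow : ∀ v ∈ V, ∑ u ∈ V, |W v u - W' v u| ≤ ε := by
    intro v hv
    calc ∑ u ∈ V, |W v u - W' v u|
        = ∑ u ∈ V, |(if u ∈ V then W v u else 0) - W' v u| :=
          Finset.sum_congr rfl fun u hu => by rw [if_pos hu]
      _ ≤ ∑ u, |(if u ∈ V then W v u else 0) - W' v u| :=
          Finset.sum_le_sum_of_subset_of_nonneg (Finset.subset_univ V)
            (fun _ _ _ => abs_nonneg _)
      _ ≤ ε := hclose v hv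
  -- error term bound
  have herr : |∑ v ∈ V, ∑ u ∈ V, f v * (W v u - W' v u) * f u| ≤ ε * ∑ v ∈ V, (f v) ^ 2 := by
    have hA : ∑ v ∈ V, ∑ u ∈ V, |W v u - W' v u| * (f v) ^ 2 ≤ ε * ∑ v ∈ V, (f v) ^ 2 := by
      rw [Finset.mul_sum]
      refine Finset.sum_le_sum fun v hv => ?_
      rw [← Finset.sum_mul]
      exact mul_le_mul_of_nonneg_right (hrow v hv) (sq_nonneg _)
    have hB : ∑ v ∈ V, ∑ u ∈ V, |W v u - W' v u| * (f u) ^ 2 ≤ ε * ∑ v ∈ V, (f v) ^ 2 := by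
      rw [Finset.sum_comm]
      calc ∑ u ∈ V, ∑ v ∈ V, |W v u - W' v u| * (f u) ^ 2
          = ∑ u ∈ V, ∑ v ∈ V, |W u v - W' u v| * (f u) ^ 2 := by
            refine Finset.sum_congr rfl fun u hu => Finset.sum_congr rfl fun v hv => ?_
            rw [hWsymm v hv u hu, hW'symm v u]
        _ ≤ ε * ∑ u ∈ V, (f u) ^ 2 := hA
    calc |∑ v ∈ V, ∑ u ∈ V, f v * (W v u - W' v u) * f u|
        ≤ ∑ v ∈ V, |∑ u ∈ V, f v * (W v u - W' v u) * f u| :=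
          Finset.abs_sum_le_sum_abs _ _
      _ ≤ ∑ v ∈ V, ∑ u ∈ V, |f v * (W v u - W' v u) * f u| :=
          Finset.sum_le_sum fun v _ => Finset.abs_sum_le_sum_abs _ _
      _ ≤ ∑ v ∈ V, ∑ u ∈ V,
            |W v u - W' v u| * (((f v) ^ 2 + (f u) ^ 2) / 2) := by
          refine Finset.sum_le_sum fun v _ => Finset.sum_le_sum fun u _ => ?_
          rw [abs_mul, abs_mul]
          have h1 : |f v| * |f u| ≤ ((f v) ^ 2 + (f u) ^ 2) / 2 := by
            nlinarith [sq_nonneg (|f v| - |f u|), sq_abs (f v), sq_abs (f u)]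
          calc |f v| * |W v u - W' v u| * |f u|
              = |W v u - W' v u| * (|f v| * |f u|) := by ring
            _ ≤ |W v u - W' v u| * (((f v) ^ 2 + (f u) ^ 2) / 2) :=
              mul_le_mul_of_nonneg_left h1 (abs_nonneg _)
      _ = (∑ v ∈ V, ∑ u ∈ V, |W v u - W' v u| * (f v) ^ 2) / 2
          + (∑ v ∈ V, ∑ u ∈ V, |W v u - W' v u| * (f u) ^ 2) / 2 := by
          simp only [Finset.sum_div]
          rw [← Finset.sum_add_distrib]
          refine Finset.sum_congr rfl fun v _ => ?_
          rw [← Finset.sum_add_distrib]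
          exact Finset.sum_congr rfl fun u _ => by ring
      _ ≤ ε * ∑ v ∈ V, (f v) ^ 2 := by linarith
  -- combine
  have hsplit : ∑ v ∈ V, ∑ v' ∈ V, f v * W v v' * f v'
      = (∑ v ∈ V, ∑ u ∈ V, f v * W' v u * f u)
        + ∑ v ∈ V, ∑ u ∈ V, f v * (W v u - W' v u) * f u := by
    rw [← Finset.sum_add_distrib]
    refine Finset.sum_congr rfl fun v _ => ?_
    rw [← Finset.sum_add_distrib]
    exact Finset.sum_congr rfl fun u _ => by ring
  calc |∑ v ∈ V, ∑ v' ∈ V, f v * W v v' * f v'|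
      ≤ |∑ v ∈ V, ∑ u ∈ V, f v * W' v u * f u|
        + |∑ v ∈ V, ∑ u ∈ V, f v * (W v u - W' v u) * f u| := by
        rw [hsplit]; exact abs_add_le _ _
    _ ≤ (lam + ε) * ∑ v ∈ V, (f v) ^ 2 := by
        rw [add_mul]; exact add_le_add hmain herr
end

section
/- Let r ≥ 1, 0 ≤ i ≤ r, b ≥ 1, n ≥ 2^{r+1}, and q = 2^b. Let e_k^{(1)}, e_k^{(2)} ∈ F_q^n for 1 ≤ k ≤ 2^{r+1}−1 be vectors such that for each ℓ ∈ {1,2} the family e_1^{(ℓ)}, …, e_{2^{r+1}−1}^{(ℓ)} is linearly independent. For 0 ≤ j ≤ i define M_j = Σ_{k : G_Had^{(r)}(k,j)=1} e_k^{(1)}(e_k^{(2)})ᵀ ∈ F_q^{n×n}, and define M' = Σ_{k=1}^{2^{r−i}} e_k^{(1)}(e_k^{(2)})ᵀ. Then: rank(M') = 2^{r−i}; M' ⪯ M_j for every 0 ≤ j ≤ i (each M_j has rank 2^r and rank(M_j − M') = 2^r − 2^{r−i}); and for every matrix M'' ∈ F_q^{n×n} satisfying M'' ⪯ M_j for all 0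 ≤ j ≤ i, one has M'' ⪯ M', i.e., rank(M' − M'') = 2^{r−i} − rank(M''). That is, M' is the unique maximal element among the matrices dominated by M_0, …, M_i in the matrix poset. -/
/-!
Let `E₁` be the matrix with columns `e₁ k` and `E₂` the one with rows `e₂ k`. Every `M_j` and `M'`
is `E₁ D_S E₂` for the diagonal 0/1 projection `D_S` onto a set `S` of rows of `G_Had`, and
`X ↦ E₁ X E₂` preserves rank because `E₁` has a left and `E₂` a right inverse. A matrix `⪯ M₀`
has its column and row spaces inside those of `M₀`, hence is also of the form `E₁ X E₂`, with
`X ⪯ D_{S_j}` for all `j ≤ i`. Such an `X` vanishes outside `S_j × S_j`, so the diagonal block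
decomposition of `D_{S_0} - X` gives `X ⪯ D_{⋂ S_j}`. Finally, row `k` of `G_Had` is the binary
complement of `k`, so the rows with a `1` in each of the columns `0, …, i` are the first `2^{r-i}`.
-/

open Finset Matrix

/-- The generator matrix `G_Had^{(r)}` of the length-`2^{r+1}−1` Hadamard code:
the entry in row `k` (zero-indexed; corresponding to the 1-indexed row `k+1`) and
column `j` is bit number `r − j` of the binary representation of `2^{r+1} − (k+1)`
(most significant bit first). -/
def GHad (r : ℕ) : Matrix (Fin (2 ^ (r + 1) - 1)) (Fin (r + 1)) (ZMod 2) :=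
  fun k j => if Nat.testBit (2 ^ (r + 1) - (k.val + 1)) (r - j.val) then 1 else 0

namespace Matrix

variable {F : Type*} [Field F] {ι κ m n : Type*}

section MinusLE

variable [Fintype n]

/-- The minus partial order `⪯` on matrices. -/
def MinusLE (A B : Matrix m n F) : Prop := (B - A).rank + A.rank = B.rank

theorem MinusLE.transpose [Fintype m] {A B : Matrix m n F} (h : MinusLE A B) :
    MinusLE Aᵀ Bᵀ := by
  rwa [MinusLE, ← transpose_sub, rank_transpose, rank_transpose, rank_transpose]

theorem MinusLE.range_le {A B : Matrix m n F} (h : MinusLE A B) :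
    LinearMap.range A.mulVecLin ≤ LinearMap.range B.mulVecLin := by
  have hsup : LinearMap.range B.mulVecLin =
      LinearMap.range (B - A).mulVecLin ⊔ LinearMap.range A.mulVecLin := by
    refine Submodule.eq_of_le_of_finrank_le ?_ ?_
    · simpa only [← mulVecLin_add, sub_add_cancel] using
        LinearMap.range_add_le (B - A).mulVecLin A.mulVecLin
    · exact (Submodule.finrank_add_le_finrank_add_finrank _ _).trans h.le
  exact hsup ▸ le_sup_right

theorem exists_eq_mul_of_range_le [Fintype κ] [DecidableEq n] {A : Matrix m n F}
    {B : Matrix m κ F} (h : LinearMap.range A.mulVecLin ≤ LinearMap.range B.mulVecLin) :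
    ∃ Y : Matrix κ n F, A = B * Y := by
  choose y hy using fun c => h ⟨Pi.single c 1, mulVec_single_one A c⟩
  refine ⟨(of y)ᵀ, ext fun a c => ?_⟩
  simpa [mul_apply, mulVec, dotProduct] using (congrFun (hy c) a).symm

theorem MinusLE.exists_eq_mul_left [DecidableEq n] {A B : Matrix m n F} (h : MinusLE A B) :
    ∃ Y : Matrix n n F, A = B * Y :=
  exists_eq_mul_of_range_le h.range_le

theorem MinusLE.exists_eq_mul_right [Fintype m] [DecidableEq m] {A B : Matrix m n F}
    (h : MinusLE A B) : ∃ Y : Matrix m m F, A = Y * B := by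
  obtain ⟨Y, hY⟩ := h.transpose.exists_eq_mul_left
  exact ⟨Yᵀ, by rw [← transpose_transpose A, hY, transpose_mul, transpose_transpose]⟩

variable [DecidableEq n] {X : Matrix n n F} {d : n → F}

theorem MinusLE.apply_eq_zero_of_diagonal_left (h : MinusLE X (diagonal d)) {a : n}
    (ha : d a = 0) (c : n) : X a c = 0 := by
  obtain ⟨Y, rfl⟩ := h.exists_eq_mul_left
  simp [ha]

theorem MinusLE.apply_eq_zero_of_diagonal_right (h : MinusLE X (diagonal d)) {a : n}
    (ha : d a = 0) (c : n) : X c a = 0 := by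
  obtain ⟨Y, rfl⟩ := h.exists_eq_mul_right
  simp [ha]

end MinusLE

theorem rank_add_of_isIdempotentElem [Fintype n] [DecidableEq n] {P B : Matrix n n F}
    (hP : IsIdempotentElem P) (hPB : P * B = 0) (hBP : B * P = 0) :
    (P + B).rank = P.rank + B.rank := by
  have hsup : LinearMap.range (P + B).mulVecLin =
      LinearMap.range P.mulVecLin ⊔ LinearMap.range B.mulVecLin := by
    refine le_antisymm ?_ (sup_le ?_ ?_)
    · simpa only [mulVecLin_add] using LinearMap.range_add_le P.mulVecLin B.mulVecLin
    · rintro _ ⟨x, rfl⟩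
      refine ⟨P *ᵥ x, ?_⟩
      simp [mulVec_mulVec, hP.eq, hBP]
    · rintro _ ⟨x, rfl⟩
      refine ⟨x - P *ᵥ x, ?_⟩
      simp [mulVec_sub, mulVec_mulVec, hP.eq, hBP]
  have hinf : LinearMap.range P.mulVecLin ⊓ LinearMap.range B.mulVecLin = ⊥ := by
    refine (Submodule.eq_bot_iff _).2 ?_
    rintro _ ⟨⟨x, rfl⟩, ⟨y, hy⟩⟩
    simp only [mulVecLin_apply] at hy ⊢
    rw [← hP.eq, ← mulVec_mulVec, ← hy, mulVec_mulVec, hPB, zero_mulVec]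
  have := Submodule.finrank_sup_add_finrank_inf_eq
    (LinearMap.range P.mulVecLin) (LinearMap.range B.mulVecLin)
  rwa [hinf, finrank_bot, add_zero, ← hsup] at this

theorem exists_mul_eq_one_of_linearIndependent_row [Fintype m] [Fintype n] [DecidableEq m]
    {A : Matrix m n F} (h : LinearIndependent F A.row) : ∃ B : Matrix n m F, A * B = 1 := by
  refine mulVec_surjective_iff_exists_right_inverse.mp ?_
  rw [← coe_mulVecLin, ← LinearMap.range_eq_top]
  refine Submodule.eq_top_of_finrank_eq ?_
  rw [← rank, h.rank_matrix, Module.finrank_fintype_fun_eq_card]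

theorem exists_mul_eq_one_of_linearIndependent_col [Fintype m] [Fintype n] [DecidableEq n]
    {A : Matrix m n F} (h : LinearIndependent F A.col) : ∃ B : Matrix n m F, B * A = 1 := by
  obtain ⟨B, hB⟩ := exists_mul_eq_one_of_linearIndependent_row (A := Aᵀ) h
  exact ⟨Bᵀ, by rw [← transpose_transpose A, ← transpose_mul, hB, transpose_one]⟩

section Conj

variable [Fintype m] [Fintype n] [Fintype ι] [Fintype κ] [DecidableEq ι] [DecidableEq κ]
  {E₁ : Matrix m ι F} {E₂ : Matrix κ n F} {L : Matrix ι m F} {R : Matrix n κ F}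

theorem rank_mul_mul_of_mul_eq_one (hL : L * E₁ = 1) (hR : E₂ * R = 1) (X : Matrix ι κ F) :
    (E₁ * X * E₂).rank = X.rank := by
  refine le_antisymm ((rank_mul_le_left _ _).trans (rank_mul_le_right _ _)) ?_
  calc X.rank = (L * (E₁ * X * E₂) * R).rank := by
        simp only [Matrix.mul_assoc, hR, ← Matrix.mul_assoc L, hL, Matrix.one_mul, Matrix.mul_one]
    _ ≤ (E₁ * X * E₂).rank := (rank_mul_le_left _ _).trans (rank_mul_le_right _ _)

theorem minusLE_mul_mul_iff (hL : L * E₁ = 1) (hR : E₂ * R = 1) {X Y : Matrix ι κ F} :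
    MinusLE (E₁ * X * E₂) (E₁ * Y * E₂) ↔ MinusLE X Y := by
  rw [MinusLE, MinusLE, ← Matrix.sub_mul, ← Matrix.mul_sub, rank_mul_mul_of_mul_eq_one hL hR,
    rank_mul_mul_of_mul_eq_one hL hR, rank_mul_mul_of_mul_eq_one hL hR]

theorem MinusLE.exists_eq_mul_mul [DecidableEq m] [DecidableEq n] (hL : L * E₁ = 1)
    (hR : E₂ * R = 1) {A : Matrix m n F} {Y : Matrix ι κ F} (h : MinusLE A (E₁ * Y * E₂)) :
    ∃ X : Matrix ι κ F, A = E₁ * X * E₂ := by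
  obtain ⟨P, hP⟩ := h.exists_eq_mul_left
  obtain ⟨Q, hQ⟩ := h.exists_eq_mul_right
  refine ⟨L * A * R, ?_⟩
  calc A = Q * (E₁ * Y * E₂) := hQ
    _ = Q * (E₁ * Y * E₂) * R * E₂ := by simp only [Matrix.mul_assoc, hR, Matrix.mul_one]
    _ = E₁ * (L * E₁) * Y * E₂ * P * R * E₂ := by
        rw [← hQ, hP, hL, Matrix.mul_one]
    _ = E₁ * (L * A * R) * E₂ := by rw [hP]; simp only [Matrix.mul_assoc]

end Conj

section diagIndicator

variable [DecidableEq n]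

def diagIndicator (S : Finset n) : Matrix n n F := diagonal fun k => if k ∈ S then 1 else 0

theorem diagIndicator_sub_diagIndicator {S T : Finset n} (hTS : T ⊆ S) :
    (diagIndicator S - diagIndicator T : Matrix n n F) = diagIndicator (S \ T) := by
  rw [diagIndicator, diagIndicator, diagIndicator, diagonal_sub]
  congr 1
  ext k
  by_cases hT : k ∈ T
  · simp [hT, hTS hT]
  · simp [hT]

variable [Fintype n]

theorem rank_diagIndicator (S : Finset n) : (diagIndicator S : Matrix n n F).rank = #S := by
  classical
  rw [diagIndicator, rank_diagonal, ← Fintype.card_coe S]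
  exact Fintype.card_congr (Equiv.subtypeEquivRight fun k => by simp)

theorem isIdempotentElem_diagIndicator (S : Finset n) :
    IsIdempotentElem (diagIndicator S : Matrix n n F) := by
  simp [IsIdempotentElem, diagIndicator, diagonal_mul_diagonal]

theorem sum_vecMulVec_eq_mul_diagIndicator_mul (u v : n → m → F) (S : Finset n) :
    ∑ k ∈ S, vecMulVec (u k) (v k) = (of u)ᵀ * (diagIndicator S : Matrix n n F) * of v := by
  ext a c
  simp [sum_apply, vecMulVec_apply, mul_apply, diagIndicator, diagonal_apply, Finset.sum_ite_mem]

theorem MinusLE.diagIndicator_of_subset {X : Matrix n n F} {S T : Finset n}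
    (hTS : T ⊆ S) (hX : MinusLE X (diagIndicator S))
    (hsupp : ∀ a ∉ T, ∀ c, X a c = 0 ∧ X c a = 0) : MinusLE X (diagIndicator T) := by
  have hB : ∀ a ∉ T, ∀ c, (diagIndicator T - X : Matrix n n F) a c = 0 ∧
      (diagIndicator T - X : Matrix n n F) c a = 0 :=
    fun a ha c => by
      by_cases hac : a = c
      · subst hac; simp [diagIndicator, ha, (hsupp a ha a).1]
      · simp [diagIndicator, hac, Ne.symm hac, hsupp a ha c]
  have hrank : (diagIndicator S - X).rank = #(S \ T) + (diagIndicator T - X).rank := by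
    rw [← sub_add_sub_cancel _ (diagIndicator T), diagIndicator_sub_diagIndicator hTS,
      rank_add_of_isIdempotentElem (isIdempotentElem_diagIndicator _), rank_diagIndicator]
    · ext a c
      rw [diagIndicator.eq_1 (S \ T), diagonal_mul, zero_apply]
      by_cases ha : a ∈ S \ T
      · rw [(hB a (mem_sdiff.1 ha).2 c).1, mul_zero]
      · rw [if_neg ha, zero_mul]
    · ext a c
      rw [diagIndicator.eq_1 (S \ T), mul_diagonal, zero_apply]
      by_cases hc : c ∈ S \ T
      · rw [(hB c (mem_sdiff.1 hc).2 a).2, zero_mul]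
      · rw [if_neg hc, mul_zero]
  have hcard := card_sdiff_add_card_eq_card hTS
  unfold MinusLE at hX ⊢
  rw [rank_diagIndicator] at hX ⊢
  omega

theorem MinusLE.diagIndicator_inf {X : Matrix n n F} {s : Finset ι}
    (hs : s.Nonempty) {S : ι → Finset n} (hX : ∀ j ∈ s, MinusLE X (diagIndicator (S j))) :
    MinusLE X (diagIndicator (s.inf S)) := by
  obtain ⟨j₀, hj₀⟩ := hs
  refine (hX j₀ hj₀).diagIndicator_of_subset (inf_le hj₀) fun a ha c => ?_
  obtain ⟨j, hj, haj⟩ : ∃ j ∈ s, a ∉ S j := by simpa [mem_inf] using ha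
  have hd : (if a ∈ S j then 1 else 0 : F) = 0 := if_neg haj
  exact ⟨(hX j hj).apply_eq_zero_of_diagonal_left hd c,
    (hX j hj).apply_eq_zero_of_diagonal_right hd c⟩

end diagIndicator

end Matrix

theorem Nat.card_filter_testBit_eq_false_range_two_pow_sub_one {m t : ℕ} (ht : t < m) :
    #{v ∈ range (2 ^ m - 1) | v.testBit t = false} = 2 ^ (m - 1) := by
  have hflip : #{v ∈ range (2 ^ m) | v.testBit t = false} =
      #{v ∈ range (2 ^ m) | ¬v.testBit t = false} := by
    have hlt : 2 ^ t < 2 ^ m := Nat.pow_lt_pow_right one_lt_two ht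
    refine card_nbij' (· ^^^ 2 ^ t) (· ^^^ 2 ^ t) ?_ ?_ ?_ ?_ <;>
      intro v hv <;> simp_all [Nat.xor_lt_two_pow]
  have htop : (2 ^ m - 1).testBit t = true := by simp [ht]
  have hpow : 2 ^ m = 2 * 2 ^ (m - 1) := by rw [← pow_succ']; congr; omega
  have htotal := card_filter_add_card_filter_not (s := range (2 ^ m)) (fun v => v.testBit t = false)
  rw [card_range, ← hflip] at htotal
  rw [← Nat.sub_add_cancel (Nat.one_le_two_pow (n := m)), range_add_one, filter_insert,
    if_neg (by simp [htop])] at htotal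
  omega

theorem Fin.card_filter_val {N : ℕ} (p : ℕ → Prop) [DecidablePred p] :
    #{k : Fin N | p k} = #{v ∈ range N | p v} := by
  refine card_bij (fun k _ => k) (by simp) (fun _ _ _ _ => Fin.ext) ?_
  simp only [mem_filter, mem_range, mem_univ, true_and]
  exact fun v ⟨h, hv⟩ => ⟨⟨v, h⟩, hv, rfl⟩

theorem GHad_eq_one_iff {r : ℕ} (k : Fin (2 ^ (r + 1) - 1)) (j : Fin (r + 1)) :
    GHad r k j = 1 ↔ (k : ℕ).testBit (r - j) = false := by
  have hk : (k : ℕ) < 2 ^ (r + 1) := by omega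
  rw [GHad, Nat.testBit_two_pow_sub_succ hk, decide_eq_true (by omega : r - j < r + 1)]
  cases (k : ℕ).testBit (r - j) <;> decide

theorem card_filter_GHad_eq_one (r : ℕ) (j : Fin (r + 1)) :
    #{k | GHad r k j = 1} = 2 ^ r := by
  simp only [GHad_eq_one_iff]
  rw [Fin.card_filter_val (fun v => v.testBit (r - j) = false),
    Nat.card_filter_testBit_eq_false_range_two_pow_sub_one (by omega), Nat.add_sub_cancel]

theorem forall_GHad_eq_one_iff {r i : ℕ} (k : Fin (2 ^ (r + 1) - 1)) :
    (∀ j : Fin (r + 1), (j : ℕ) ≤ i → GHad r k j = 1) ↔ (k : ℕ) < 2 ^ (r - i) := by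
  simp only [GHad_eq_one_iff]
  refine ⟨fun h => ?_, fun hk j hj =>
    Nat.testBit_lt_two_pow (hk.trans_le (Nat.pow_le_pow_right two_pos (by omega)))⟩
  by_contra! hk
  obtain ⟨t, hti, ht⟩ := Nat.exists_ge_and_testBit_of_ge_two_pow hk
  have htr : t ≤ r := by
    by_contra! h
    have : (k : ℕ) < 2 ^ t :=
      k.isLt.trans_le ((Nat.sub_le _ _).trans (Nat.pow_le_pow_right two_pos h))
    simp [Nat.testBit_lt_two_pow this] at ht
  have := h ⟨r - t, by omega⟩ (by simp only; omega)
  simp [Nat.sub_sub_self htr, ht] at this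

theorem inf_filter_GHad_eq_one (r i : ℕ) :
    ({j | (j : ℕ) ≤ i} : Finset (Fin (r + 1))).inf
        (fun j => ({k | GHad r k j = 1} : Finset (Fin (2 ^ (r + 1) - 1)))) =
      ({k | (k : ℕ) < 2 ^ (r - i)} : Finset (Fin (2 ^ (r + 1) - 1))) := by
  ext k
  simpa [mem_inf] using forall_GHad_eq_one_iff k

theorem stmt6_general (r b n i : ℕ)
    (e₁ e₂ : Fin (2 ^ (r + 1) - 1) → (Fin n → GaloisField 2 b))
    (h₁ : LinearIndependent (GaloisField 2 b) e₁)
    (h₂ : LinearIndependent (GaloisField 2 b) e₂) :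
    let M : Fin (r + 1) → Matrix (Fin n) (Fin n) (GaloisField 2 b) := fun j =>
      ∑ k ∈ Finset.univ.filter (fun k => GHad r k j = 1), Matrix.vecMulVec (e₁ k) (e₂ k)
    let M' : Matrix (Fin n) (Fin n) (GaloisField 2 b) :=
      ∑ k ∈ Finset.univ.filter (fun k : Fin (2 ^ (r + 1) - 1) => k.val < 2 ^ (r - i)),
        Matrix.vecMulVec (e₁ k) (e₂ k)
    M'.rank = 2 ^ (r - i) ∧
      (∀ j : Fin (r + 1), j.val ≤ i →
        (M j).rank = 2 ^ r ∧ (M j - M').rank = 2 ^ r - 2 ^ (r - i)) ∧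
      (∀ M'' : Matrix (Fin n) (Fin n) (GaloisField 2 b),
        (∀ j : Fin (r + 1), j.val ≤ i → (M j - M'').rank + M''.rank = (M j).rank) →
        (M' - M'').rank + M''.rank = 2 ^ (r - i)) := by
  intro M M'
  have hM j : M j = _ := sum_vecMulVec_eq_mul_diagIndicator_mul e₁ e₂ _
  have hM' : M' = _ := sum_vecMulVec_eq_mul_diagIndicator_mul e₁ e₂ _
  obtain ⟨L, hL⟩ := exists_mul_eq_one_of_linearIndependent_col (A := (of e₁)ᵀ) h₁
  obtain ⟨R, hR⟩ := exists_mul_eq_one_of_linearIndependent_row (A := of e₂) h₂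
  have hrank := rank_mul_mul_of_mul_eq_one hL hR
  have hinf := inf_filter_GHad_eq_one r i
  have hcard : #{k : Fin (2 ^ (r + 1) - 1) | (k : ℕ) < 2 ^ (r - i)} = 2 ^ (r - i) := by
    have : 2 ^ (r - i) < 2 ^ (r + 1) := Nat.pow_lt_pow_right one_lt_two (by omega)
    rw [Fin.card_filter_val_lt]; omega
  have hM'rank : M'.rank = 2 ^ (r - i) := by rw [hM', hrank, rank_diagIndicator, hcard]
  refine ⟨hM'rank, fun j hj => ⟨?_, ?_⟩, fun M'' hM'' => ?_⟩
  · rw [hM, hrank, rank_diagIndicator, card_filter_GHad_eq_one]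
  · have hsub := hinf ▸ inf_le (b := j) (by simpa using hj)
    rw [hM, hM', ← Matrix.sub_mul, ← Matrix.mul_sub, diagIndicator_sub_diagIndicator hsub, hrank,
      rank_diagIndicator, card_sdiff_of_subset hsub, card_filter_GHad_eq_one, hcard]
  · have hle : ∀ j ∈ ({j | (j : ℕ) ≤ i} : Finset (Fin (r + 1))), MinusLE M'' (M j) :=
      fun j hj => hM'' j (by simpa using hj)
    simp only [hM] at hle
    obtain ⟨X, rfl⟩ := (hle 0 (by simp)).exists_eq_mul_mul hL hR
    have hX := MinusLE.diagIndicator_inf ⟨0, by simp⟩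
      fun j hj => (minusLE_mul_mul_iff hL hR).1 (hle j hj)
    rwa [hinf, ← minusLE_mul_mul_iff hL hR, ← hM', MinusLE, hM'rank] at hX

/-- Given linearly independent families `e₁, e₂` of `2^{r+1}−1` vectors
in `F_q^n` and `0 ≤ i ≤ r`, let `M_j = Σ_{k : G_Had^{(r)}(k,j)=1} e₁ₖ e₂ₖᵀ` for `0 ≤ j ≤ i`
and `M' = Σ_{k=1}^{2^{r−i}} e₁ₖ e₂ₖᵀ`. Then `rank M' = 2^{r−i}`, `M' ⪯ M_j` for each
`j ≤ i` (each `M_j` having rank `2^r`), and any `M''` dominated by all the `M_j` is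
dominated by `M'`: `M'` is the unique maximal element among matrices dominated by
`M₀, …, M_i` in the matrix poset. -/
theorem stmt6 (r b n i : ℕ) (hr : 1 ≤ r) (hb : 1 ≤ b) (hn : 2 ^ (r + 1) ≤ n) (hi : i ≤ r)
    (e₁ e₂ : Fin (2 ^ (r + 1) - 1) → (Fin n → GaloisField 2 b))
    (h₁ : LinearIndependent (GaloisField 2 b) e₁)
    (h₂ : LinearIndependent (GaloisField 2 b) e₂) :
    let M : Fin (r + 1) → Matrix (Fin n) (Fin n) (GaloisField 2 b) := fun j =>
      ∑ k ∈ Finset.univ.filter (fun k => GHad r k j = 1), Matrix.vecMulVec (e₁ k) (e₂ k)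
    let M' : Matrix (Fin n) (Fin n) (GaloisField 2 b) :=
      ∑ k ∈ Finset.univ.filter (fun k : Fin (2 ^ (r + 1) - 1) => k.val < 2 ^ (r - i)),
        Matrix.vecMulVec (e₁ k) (e₂ k)
    M'.rank = 2 ^ (r - i) ∧
      (∀ j : Fin (r + 1), j.val ≤ i →
        (M j).rank = 2 ^ r ∧ (M j - M').rank = 2 ^ r - 2 ^ (r - i)) ∧
      (∀ M'' : Matrix (Fin n) (Fin n) (GaloisField 2 b),
        (∀ j : Fin (r + 1), j.val ≤ i → (M j - M'').rank + M''.rank = (M j).rank) →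
        (M' - M'').rank + M''.rank = 2 ^ (r - i)) :=
  stmt6_general r b n i e₁ e₂ h₁ h₂
end

section
/- Let X be a rank-1 F₂-Grassmannian complex with span_{F₂} X(0) = F₂^k and let Y = Cay(F₂^k, X). Then the F₂-linear map φ : Z₁ → F₂^{X(0)} defined by φ(α) = Σ_{e ∈ Y(1) with α(e)=1} 1_{label(e)} satisfies: (i) φ(Z₁) ⊆ ker(G_Xᵀ); (ii) φ(B₁ + S₁) ⊆ im(H_Xᵀ); and (iii) the induced F₂-linear map Z₁/(B₁ + S₁) → ker(G_Xᵀ)/im(H_Xᵀ) is an isomorphism of F₂-vector spaces. In particular H₁(Y)/(S₁ + B₁) ≅ ker(G_Xᵀ)/im(H_Xᵀ). -/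
open scoped Classical

noncomputable section

/-- The group `F₂^k`. -/
abbrev Vk (k : ℕ) : Type := Fin k → ZMod 2

/-- The edge set `Y(1)` of the Cayley simplicial complex `Y = Cay(F₂^k, X)`:
all unordered pairs `{v, v + x₀}` with `x₀ ∈ X(0)`. -/
def edgeSet (k : ℕ) (X0 : Finset (Vk k)) : Set (Sym2 (Vk k)) :=
  {e | ∃ v x₀, x₀ ∈ X0 ∧ e = s(v, v + x₀)}

/-- The type of edges of `Y`. -/
abbrev Edge (k : ℕ) (X0 : Finset (Vk k)) : Type := {e : Sym2 (Vk k) // e ∈ edgeSet k X0}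

/-- The space of 1-chains `C₁ = F₂^{Y(1)}`. -/
abbrev C1 (k : ℕ) (X0 : Finset (Vk k)) : Type := Edge k X0 → ZMod 2

/-- The label of an edge `{u, v}` is `u + v` (well defined on unordered pairs). -/
def elabel (k : ℕ) : Sym2 (Vk k) → Vk k :=
  Sym2.lift ⟨fun u v => u + v, fun u v => add_comm u v⟩

/-- The space of 1-cycles `Z₁ = ker ∂₁`, where `(∂₁ α)(u) = Σ_{e ∋ u} α(e)`. -/
def Z1 (k : ℕ) (X0 : Finset (Vk k)) : Submodule (ZMod 2) (C1 k X0) :=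
  ⨅ u : Vk k, LinearMap.ker
    ((∑ e ∈ Finset.univ.filter (fun e : Edge k X0 => u ∈ e.val),
      LinearMap.proj e : C1 k X0 →ₗ[ZMod 2] ZMod 2))

/-- The boundaries of the triangles of `Y`: for each `v ∈ F₂^k` and `x₀ ≠ x₀' ∈ X(0)`
with `{0, x₀, x₀', x₀+x₀'} = span{x₀, x₀'} ∈ X(1)`, the 1-chain supported on the three
edges `{v, v+x₀}`, `{v, v+x₀'}`, `{v+x₀, v+x₀'}`. -/
def triangleBoundaries (k : ℕ) (X0 : Finset (Vk k))
    (X1 : Set (Submodule (ZMod 2) (Vk k))) : Set (C1 k X0) :=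
  {α | ∃ v x₀ x₀' : Vk k, x₀ ∈ X0 ∧ x₀' ∈ X0 ∧ x₀ ≠ x₀' ∧
    Submodule.span (ZMod 2) {x₀, x₀'} ∈ X1 ∧
    ∀ e : Edge k X0, α e =
      (if e.val = s(v, v + x₀) then 1 else 0) +
      (if e.val = s(v, v + x₀') then 1 else 0) +
      (if e.val = s(v + x₀, v + x₀') then 1 else 0)}

/-- `B₁ = im ∂₂`, the span of the boundaries of the triangles of `Y`. -/
def B1 (k : ℕ) (X0 : Finset (Vk k)) (X1 : Set (Submodule (ZMod 2) (Vk k))) :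
    Submodule (ZMod 2) (C1 k X0) :=
  Submodule.span (ZMod 2) (triangleBoundaries k X0 X1)

/-- The generating swap cycles: for `v ∈ F₂^k` and `x₀ ≠ x₀' ∈ X(0)`, the 1-chain
supported on the four edges `{v, v+x₀}`, `{v+x₀, v+x₀+x₀'}`, `{v+x₀', v+x₀+x₀'}`,
`{v, v+x₀'}`. -/
def swapCycles (k : ℕ) (X0 : Finset (Vk k)) : Set (C1 k X0) :=
  {α | ∃ v x₀ x₀' : Vk k, x₀ ∈ X0 ∧ x₀' ∈ X0 ∧ x₀ ≠ x₀' ∧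
    ∀ e : Edge k X0, α e =
      (if e.val = s(v, v + x₀) then 1 else 0) +
      (if e.val = s(v + x₀, v + x₀ + x₀') then 1 else 0) +
      (if e.val = s(v + x₀', v + x₀ + x₀') then 1 else 0) +
      (if e.val = s(v, v + x₀') then 1 else 0)}

/-- `S₁`, the span of the swap cycles. -/
def S1 (k : ℕ) (X0 : Finset (Vk k)) : Submodule (ZMod 2) (C1 k X0) :=
  Submodule.span (ZMod 2) (swapCycles k X0)

/-- The map `φ : C₁ → F₂^{X(0)}`, `φ(α) = Σ_{e : α(e)=1} 1_{label(e)}`; its value at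
`x₀ ∈ X(0)` is `Σ_{e : label(e) = x₀} α(e)`. -/
def phi (k : ℕ) (X0 : Finset (Vk k)) : C1 k X0 →ₗ[ZMod 2] (↥X0 → ZMod 2) :=
  LinearMap.pi (fun x : ↥X0 =>
    (∑ e ∈ Finset.univ.filter (fun e : Edge k X0 => elabel k e.val = x.val),
      LinearMap.proj e : C1 k X0 →ₗ[ZMod 2] ZMod 2))

/-- The linear map `G_Xᵀ : F₂^{X(0)} → F₂^k`, `u ↦ Σ_{x₀ ∈ X(0)} u(x₀) • x₀`. -/
def GXt (k : ℕ) (X0 : Finset (Vk k)) : (↥X0 → ZMod 2) →ₗ[ZMod 2] Vk k :=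
  ∑ x : ↥X0, LinearMap.smulRight
    ((LinearMap.proj x : (↥X0 → ZMod 2) →ₗ[ZMod 2] ZMod 2)) (x.val)

/-- `im H_Xᵀ ⊆ F₂^{X(0)}`: the span of the indicator vectors of the triples of nonzero
elements of the 2-dimensional subspaces `x₁ ∈ X(1)`. -/
def imHXt (k : ℕ) (X0 : Finset (Vk k)) (X1 : Set (Submodule (ZMod 2) (Vk k))) :
    Submodule (ZMod 2) (↥X0 → ZMod 2) :=
  Submodule.span (ZMod 2)
    {u : ↥X0 → ZMod 2 | ∃ W ∈ X1, ∀ x : ↥X0, u x = if (x : Vk k) ∈ W then 1 else 0}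

/-!
Edges of `Y` are steps `v ↦ v + x` with `x ∈ X(0)`, so a word `L` in `X(0)` together with a
start vertex gives a walk, and `φ` of the walk counts the letters of `L` mod 2. Since
`X(0)` spans `F₂^k`, every vertex is joined to `0` by a walk, and summing over the edges of a
cycle `γ` the closed walks "path to `u`, edge `{u, w}`, path back from `w`" shows that `γ` is
itself a closed walk from `0`. Its word sums to `0`, which is (i). Swap cycles let adjacent
letters commute and a backtrack `x x` is the zero chain, so a closed walk with `φ = 0` lies in
`S₁`. A triangle boundary is the closed walk `x, x + x', x'`, whose `φ` is the generator of
`im H_Xᵀ` for `span {x, x'}`; lifting `φ α ∈ im H_Xᵀ` to `B₁` therefore reduces injectivity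
to the previous statement, and walks along the support of `u ∈ ker G_Xᵀ` give surjectivity.
-/

namespace CayleyComplex

open Finset

section CharTwo

variable {G : Type*} [AddCommGroup G] [Module (ZMod 2) G]

@[simp] lemma add_add_cancel_right_of_char_two (a b : G) : a + b + b = a := by
  rw [add_assoc, ZModModule.add_self, add_zero]

@[simp] lemma add_add_cancel_left_of_char_two (a b : G) : a + (a + b) = b := by
  rw [← add_assoc, ZModModule.add_self, zero_add]

lemma add_ne_zero_of_ne_of_char_two {a b : G} (h : a ≠ b) : a + b ≠ 0 :=
  fun h' => h (sub_eq_zero.mp ((ZModModule.sub_eq_add a b).trans h'))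

lemma zmod_two_eq_zero_or_eq_one (c : ZMod 2) : c = 0 ∨ c = 1 := by
  revert c
  decide

lemma mem_span_pair_iff_of_char_two {x y w : G} :
    w ∈ Submodule.span (ZMod 2) {x, y} ↔ w = 0 ∨ w = x ∨ w = y ∨ w = x + y := by
  rw [Submodule.mem_span_pair]
  constructor
  · rintro ⟨a, b, rfl⟩
    rcases zmod_two_eq_zero_or_eq_one a with rfl | rfl <;>
      rcases zmod_two_eq_zero_or_eq_one b with rfl | rfl <;> simp
  · rintro (rfl | rfl | rfl | rfl)
    exacts [⟨0, 0, by simp⟩, ⟨1, 0, by simp⟩, ⟨0, 1, by simp⟩, ⟨1, 1, by simp⟩]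

end CharTwo

variable {k : ℕ} {X0 : Finset (Vk k)} {X1 : Set (Submodule (ZMod 2) (Vk k))}

def edge (v : Vk k) (x : X0) : Edge k X0 := ⟨s(v, v + ↑x), v, x, x.2, rfl⟩

lemma edge_val (v : Vk k) (x : X0) : (edge v x).val = s(v, v + ↑x) := rfl

lemma exists_eq_edge (e : Edge k X0) : ∃ v x, e = edge v x := by
  obtain ⟨_, v, x, hx, rfl⟩ := e
  exact ⟨v, ⟨x, hx⟩, rfl⟩

lemma edge_add_self (v : Vk k) (x : X0) : edge (v + (x : Vk k)) x = edge v x :=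
  Subtype.ext <| by simp [edge_val, Sym2.eq_swap]

lemma elabel_edge (v : Vk k) (x : X0) : elabel k (edge v x).val = x := by
  simp [elabel, edge_val]

lemma self_ne_add (h00 : (0 : Vk k) ∉ X0) (v : Vk k) (x : X0) : v ≠ v + ↑x := by
  intro h
  exact h00 (left_eq_add.mp h ▸ x.2)

def walkChain : Vk k → List X0 → C1 k X0
  | _, [] => 0
  | v, x :: L => Pi.single (edge v x) 1 + walkChain (v + ↑x) L

def wordSum (L : List X0) : Vk k := (L.map Subtype.val).sum

@[simp] lemma wordSum_nil : wordSum ([] : List X0) = 0 := rfl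

@[simp] lemma wordSum_cons (x : X0) (L : List X0) : wordSum (x :: L) = ↑x + wordSum L := by
  simp [wordSum]

@[simp] lemma wordSum_append (A B : List X0) : wordSum (A ++ B) = wordSum A + wordSum B := by
  simp [wordSum]

@[simp] lemma wordSum_reverse (L : List X0) : wordSum L.reverse = wordSum L := by
  simp [wordSum, List.sum_reverse]

lemma walkChain_append (v : Vk k) (A B : List X0) :
    walkChain v (A ++ B) = walkChain v A + walkChain (v + wordSum A) B := by
  induction A generalizing v with
  | nil => simp [walkChain]
  | cons x A ih => simp [walkChain, ih, add_assoc]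

lemma walkChain_reverse (v : Vk k) (L : List X0) :
    walkChain v L = walkChain (v + wordSum L) L.reverse := by
  induction L generalizing v with
  | nil => simp [walkChain]
  | cons x L ih =>
    rw [walkChain, ih, List.reverse_cons, walkChain_append, wordSum_reverse, wordSum_cons,
      ← add_assoc, add_add_cancel_right_of_char_two, walkChain, walkChain, edge_add_self,
      add_zero, add_comm]

lemma walkChain_cons_cons_self (v : Vk k) (x : X0) (L : List X0) :
    walkChain v (x :: x :: L) = walkChain v L := by
  simp [walkChain, edge_add_self]

def boundary1 : C1 k X0 →ₗ[ZMod 2] (Vk k → ZMod 2) :=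
  LinearMap.pi fun u => ∑ e ∈ univ.filter (fun e : Edge k X0 => u ∈ e.val), LinearMap.proj e

lemma Z1_eq_ker_boundary1 : Z1 k X0 = LinearMap.ker boundary1 := (LinearMap.ker_pi _).symm

lemma boundary1_apply (α : C1 k X0) (u : Vk k) :
    boundary1 α u = ∑ e ∈ univ.filter (fun e : Edge k X0 => u ∈ e.val), α e := by
  simp [boundary1]

lemma sum_filter_mem_edge {M : Type*} [AddCommMonoid M] (h00 : (0 : Vk k) ∉ X0) (P : Vk k → M)
    (v : Vk k) (x : X0) :
    ∑ u ∈ univ.filter (· ∈ (edge v x).val), P u = P v + P (v + ↑x) := by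
  rw [← sum_pair (self_ne_add h00 v x)]
  congr 1
  ext u
  simp [edge_val]

lemma boundary1_single_edge (h00 : (0 : Vk k) ∉ X0) (v : Vk k) (x : X0) :
    boundary1 (Pi.single (edge v x) 1) = Pi.single v 1 + Pi.single (v + ↑x) 1 := by
  funext u
  rw [boundary1_apply, sum_pi_single', Pi.add_apply,
    ← sum_filter_mem_edge h00 (fun w => Pi.single w (1 : ZMod 2) u)]
  simp [Pi.single_apply]

lemma boundary1_walkChain (h00 : (0 : Vk k) ∉ X0) (v : Vk k) (L : List X0) :
    boundary1 (walkChain v L) = Pi.single v 1 + Pi.single (v + wordSum L) 1 := by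
  induction L generalizing v with
  | nil => simp [walkChain, ZModModule.add_self]
  | cons x L ih =>
    rw [walkChain, map_add, boundary1_single_edge h00, ih, ZModModule.add_add_add_cancel,
      wordSum_cons, add_assoc]

lemma walkChain_mem_Z1 (h00 : (0 : Vk k) ∉ X0) (v : Vk k) {L : List X0} (hL : wordSum L = 0) :
    walkChain v L ∈ Z1 k X0 := by
  rw [Z1_eq_ker_boundary1, LinearMap.mem_ker, boundary1_walkChain h00, hL, add_zero,
    ZModModule.add_self]

lemma phi_apply (α : C1 k X0) (y : X0) :
    phi k X0 α y = ∑ e ∈ univ.filter (fun e : Edge k X0 => elabel k e.val = y), α e := by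
  simp only [phi, LinearMap.pi_apply, LinearMap.sum_apply, LinearMap.proj_apply]

lemma phi_single_edge (v : Vk k) (x : X0) :
    phi k X0 (Pi.single (edge v x) 1) = Pi.single x 1 := by
  funext y
  rw [phi_apply, sum_pi_single', Pi.single_apply]
  simp only [mem_filter, mem_univ, true_and, elabel_edge, ← Subtype.ext_iff, eq_comm]

lemma phi_walkChain_cons (v : Vk k) (x : X0) (L : List X0) :
    phi k X0 (walkChain v (x :: L)) = Pi.single x 1 + phi k X0 (walkChain (v + x) L) := by
  rw [walkChain, map_add, phi_single_edge]

lemma phi_walkChain_apply (v : Vk k) (L : List X0) (y : X0) :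
    phi k X0 (walkChain v L) y = L.count y := by
  induction L generalizing v with
  | nil => simp [walkChain]
  | cons x L ih =>
    rw [phi_walkChain_cons, Pi.add_apply, ih, List.count_cons, Pi.single_apply]
    obtain rfl | h := eq_or_ne y x <;> simp [*, Ne.symm, add_comm]

lemma GXt_apply (c : X0 → ZMod 2) : GXt k X0 c = ∑ x, c x • (x : Vk k) := by
  simp [GXt]

lemma GXt_single (x : X0) : GXt k X0 (Pi.single x 1) = x := by
  simp [GXt_apply, Pi.single_apply]

lemma GXt_phi_walkChain (v : Vk k) (L : List X0) :
    GXt k X0 (phi k X0 (walkChain v L)) = wordSum L := by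
  induction L generalizing v with
  | nil => simp [walkChain]
  | cons x L ih => rw [phi_walkChain_cons, map_add, ih, GXt_single, wordSum_cons]

def supportWord (c : X0 → ZMod 2) : List X0 := (univ.filter (c · = 1)).toList

lemma phi_walkChain_supportWord (v : Vk k) (c : X0 → ZMod 2) :
    phi k X0 (walkChain v (supportWord c)) = c := by
  funext y
  have hnd := Finset.nodup_toList (univ.filter (c · = 1))
  rw [phi_walkChain_apply, supportWord]
  obtain h | h := zmod_two_eq_zero_or_eq_one (c y)
  · rw [List.count_eq_zero_of_not_mem (by simp [h]), h, Nat.cast_zero]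
  · rw [List.count_eq_one_of_mem hnd (by simp [h]), h, Nat.cast_one]

lemma wordSum_supportWord (c : X0 → ZMod 2) : wordSum (supportWord c) = GXt k X0 c := by
  rw [← GXt_phi_walkChain 0, phi_walkChain_supportWord]

lemma exists_wordSum_eq (hspan : Submodule.span (ZMod 2) (X0 : Set (Vk k)) = ⊤) (u : Vk k) :
    ∃ L : List X0, wordSum L = u := by
  obtain ⟨c, hc⟩ := Submodule.mem_span_finset'.mp (hspan ▸ Submodule.mem_top : u ∈ _)
  exact ⟨supportWord c, by rw [wordSum_supportWord, GXt_apply, hc]⟩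

lemma sum_smul_sum_mem_eq_sum_boundary1_smul {M : Type*} [AddCommMonoid M] [Module (ZMod 2) M]
    (γ : C1 k X0) (P : Vk k → M) :
    ∑ e, γ e • ∑ u ∈ univ.filter (· ∈ e.val), P u = ∑ u, boundary1 γ u • P u := by
  simp_rw [boundary1_apply, sum_smul, smul_sum, sum_filter]
  exact sum_comm

def closedWalks : Submodule (ZMod 2) (C1 k X0) where
  carrier := {α | ∃ L, wordSum L = 0 ∧ walkChain 0 L = α}
  zero_mem' := ⟨[], rfl, rfl⟩
  add_mem' := by
    rintro _ _ ⟨A, hA, rfl⟩ ⟨B, hB, rfl⟩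
    exact ⟨A ++ B, by simp [hA, hB], by rw [walkChain_append, hA, add_zero]⟩
  smul_mem' := by
    rintro c _ ⟨L, hL, rfl⟩
    obtain rfl | rfl := zmod_two_eq_zero_or_eq_one c
    · exact ⟨[], rfl, by simp [walkChain]⟩
    · exact ⟨L, hL, (one_smul _ _).symm⟩

lemma Z1_le_closedWalks (h00 : (0 : Vk k) ∉ X0)
    (hspan : Submodule.span (ZMod 2) (X0 : Set (Vk k)) = ⊤) : Z1 k X0 ≤ closedWalks := by
  choose path hpath using exists_wordSum_eq hspan
  have hedge (e : Edge k X0) :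
      Pi.single e 1 + ∑ u ∈ univ.filter (· ∈ e.val), walkChain 0 (path u) ∈ closedWalks := by
    obtain ⟨v, x, rfl⟩ := exists_eq_edge e
    refine ⟨path v ++ x :: (path (v + x)).reverse, ?_, ?_⟩
    · simp [hpath, add_left_comm (x : Vk k) v, ZModModule.add_self]
    · rw [sum_filter_mem_edge h00, walkChain_append, hpath, zero_add, walkChain,
        walkChain_reverse 0 (path (v + x)), hpath, zero_add]
      abel
  intro γ hγ
  -- the path terms add up to `∑ u, (∂γ)(u) • path u`, which vanishes
  have hdecomp : γ = ∑ e, γ e •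
      (Pi.single e 1 + ∑ u ∈ univ.filter (· ∈ e.val), walkChain 0 (path u)) := by
    rw [Z1_eq_ker_boundary1, LinearMap.mem_ker] at hγ
    simp_rw [smul_add, sum_add_distrib, sum_smul_sum_mem_eq_sum_boundary1_smul, hγ,
      Pi.zero_apply, zero_smul, sum_const_zero, add_zero]
    exact pi_eq_sum_univ' γ
  rw [hdecomp]
  exact sum_mem fun e _ => closedWalks.smul_mem _ (hedge e)

lemma phi_walkChain_perm {L L' : List X0} (h : L.Perm L') (v w : Vk k) :
    phi k X0 (walkChain v L) = phi k X0 (walkChain w L') := by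
  funext y
  rw [phi_walkChain_apply, phi_walkChain_apply, h.count_eq]

lemma walkChain_swap_apply (v : Vk k) (x y : X0) (e : Edge k X0) :
    (walkChain v [x, y] + walkChain v [y, x]) e =
      (if e.val = s(v, v + x) then 1 else 0) +
      (if e.val = s(v + x, v + x + y) then 1 else 0) +
      (if e.val = s(v + y, v + x + y) then 1 else 0) +
      (if e.val = s(v, v + y) then 1 else 0) := by
  simp only [walkChain, Pi.add_apply, Pi.single_apply, Subtype.ext_iff, edge_val,
    add_zero, add_right_comm v (y : Vk k)]
  ring

lemma walkChain_swap_mem_S1 (v : Vk k) (x y : X0) :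
    walkChain v [x, y] + walkChain v [y, x] ∈ S1 k X0 := by
  obtain rfl | hne := eq_or_ne x y
  · rw [ZModModule.add_self]
    exact zero_mem _
  · exact Submodule.subset_span
      ⟨v, x, y, x.2, y.2, Subtype.coe_ne_coe.mpr hne, walkChain_swap_apply v x y⟩

lemma S1_le_ker_phi : S1 k X0 ≤ LinearMap.ker (phi k X0) := by
  rw [S1, Submodule.span_le]
  rintro α ⟨v, x, y, hx, hy, -, hα⟩
  have hα' : α = walkChain v [⟨x, hx⟩, ⟨y, hy⟩] + walkChain v [⟨y, hy⟩, ⟨x, hx⟩] :=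
    funext fun e => (hα e).trans (walkChain_swap_apply v ⟨x, hx⟩ ⟨y, hy⟩ e).symm
  rw [SetLike.mem_coe, LinearMap.mem_ker, hα', map_add,
    phi_walkChain_perm (List.Perm.swap _ _ []) v v, ZModModule.add_self]

lemma walkChain_sub_mem_S1_of_perm {L L' : List X0} (h : L.Perm L') (v : Vk k) :
    walkChain v L - walkChain v L' ∈ S1 k X0 := by
  induction h generalizing v with
  | nil => simp
  | cons x _ ih => simpa [walkChain] using ih (v + x)
  | swap x y L =>
    have hdiff : walkChain v (y :: x :: L) - walkChain v (x :: y :: L) =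
        walkChain v [y, x] - walkChain v [x, y] := by
      simp only [walkChain, add_right_comm v (x : Vk k)]
      abel
    rw [hdiff, ZModModule.sub_eq_add]
    exact walkChain_swap_mem_S1 v y x
  | trans _ _ ih₁ ih₂ => simpa using add_mem (ih₁ v) (ih₂ v)

lemma walkChain_mem_S1_of_phi_eq_zero (v : Vk k) :
    ∀ L : List X0, phi k X0 (walkChain v L) = 0 → walkChain v L ∈ S1 k X0
  | [], _ => zero_mem _
  | x :: L, h => by
    have hx : x ∈ L := by
      by_contra hx
      have := congrFun h x
      rw [phi_walkChain_apply, List.count_cons_self, List.count_eq_zero_of_not_mem hx] at this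
      exact one_ne_zero this
    have hperm : (x :: L).Perm (x :: x :: L.erase x) := (List.perm_cons_erase hx).cons x
    have hrest : phi k X0 (walkChain v (L.erase x)) = 0 := by
      rwa [← walkChain_cons_cons_self v x, ← phi_walkChain_perm hperm v v]
    rw [← sub_add_cancel (walkChain v (x :: L)) (walkChain v (L.erase x))]
    refine add_mem ?_ (walkChain_mem_S1_of_phi_eq_zero v (L.erase x) hrest)
    simpa [walkChain_cons_cons_self] using walkChain_sub_mem_S1_of_perm hperm v
termination_by L => L.length
decreasing_by simp [List.length_erase_of_mem hx]

lemma walkChain_triangle_apply (v : Vk k) (x y z : X0) (hz : (z : Vk k) = x + y)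
    (e : Edge k X0) :
    walkChain v [x, z, y] e =
      (if e.val = s(v, v + x) then 1 else 0) +
      (if e.val = s(v, v + y) then 1 else 0) +
      (if e.val = s(v + x, v + y) then 1 else 0) := by
  simp only [walkChain, Pi.add_apply, Pi.single_apply, Subtype.ext_iff, edge_val, add_zero, hz,
    ← add_assoc, add_add_cancel_right_of_char_two, Sym2.eq_swap (a := v + y)]
  ring

lemma exists_walkChain_of_mem_triangleBoundaries
    (hX1sub : ∀ W ∈ X1, ∀ x ∈ W, x ≠ 0 → x ∈ X0) {α : C1 k X0}
    (hα : α ∈ triangleBoundaries k X0 X1) :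
    ∃ (v : Vk k) (x y z : X0), x ≠ y ∧ (z : Vk k) = x + y ∧
      Submodule.span (ZMod 2) ({(x : Vk k), (y : Vk k)} : Set (Vk k)) ∈ X1 ∧
      α = walkChain v [x, z, y] := by
  obtain ⟨v, x, y, hx, hy, hne, hW, hα⟩ := hα
  have hz : x + y ∈ X0 := hX1sub _ hW _
    (add_mem (Submodule.subset_span (by simp)) (Submodule.subset_span (by simp)))
    (add_ne_zero_of_ne_of_char_two hne)
  have hα' : α = walkChain v [⟨x, hx⟩, ⟨x + y, hz⟩, ⟨y, hy⟩] :=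
    funext fun e =>
      (hα e).trans (walkChain_triangle_apply v ⟨x, hx⟩ ⟨y, hy⟩ ⟨x + y, hz⟩ rfl e).symm
  exact ⟨v, ⟨x, hx⟩, ⟨y, hy⟩, ⟨x + y, hz⟩, Subtype.coe_ne_coe.mp hne, rfl, hW, hα'⟩

lemma phi_walkChain_triangle (h00 : (0 : Vk k) ∉ X0) (v : Vk k) {x y z : X0} (hxy : x ≠ y)
    (hz : (z : Vk k) = x + y) :
    phi k X0 (walkChain v [x, z, y]) =
      fun w : X0 =>
        if (w : Vk k) ∈ Submodule.span (ZMod 2) ({(x : Vk k), (y : Vk k)} : Set (Vk k))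
        then 1 else 0 := by
  have hx : (x : Vk k) ≠ 0 := ne_of_mem_of_not_mem x.2 h00
  have hy : (y : Vk k) ≠ 0 := ne_of_mem_of_not_mem y.2 h00
  have hzx : z ≠ x := fun h => hy (by simpa [hz] using congrArg Subtype.val h)
  have hzy : z ≠ y := fun h => hx (by simpa [hz] using congrArg Subtype.val h)
  have hspan (w : X0) :
      (w : Vk k) ∈ Submodule.span (ZMod 2) {(x : Vk k), (y : Vk k)} ↔ w = x ∨ w = z ∨ w = y := by
    rw [mem_span_pair_iff_of_char_two, ← hz]
    simp only [Subtype.ext_iff, ne_of_mem_of_not_mem w.2 h00, false_or]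
    tauto
  funext w
  rw [phi_walkChain_apply]
  by_cases hw : (w : Vk k) ∈ Submodule.span (ZMod 2) {(x : Vk k), (y : Vk k)}
  · rw [if_pos hw]
    rcases (hspan w).mp hw with rfl | rfl | rfl <;>
      simp [hxy, hzx, hzy, hxy.symm, hzx.symm, hzy.symm]
  · rw [if_neg hw]
    simp only [hspan, not_or] at hw
    simp [Ne.symm hw.1, Ne.symm hw.2.1, Ne.symm hw.2.2]

lemma exists_span_pair_eq_of_finrank_eq_two {K V : Type*} [Field K] [AddCommGroup V]
    [Module K V] {W : Submodule K V} (hW : Module.finrank K W = 2) :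
    ∃ x y : V, LinearIndependent K ![x, y] ∧ Submodule.span K {x, y} = W := by
  have : Module.Finite K W := Module.finite_of_finrank_pos (by omega)
  let b := Module.finBasisOfFinrankEq K W hW
  have hb : W.subtype ∘ b = ![(b 0 : V), (b 1 : V)] := by
    funext i; fin_cases i <;> rfl
  refine ⟨b 0, b 1, hb ▸ b.linearIndependent.map' _ W.ker_subtype, ?_⟩
  rw [← Matrix.range_cons_cons_empty, ← hb, Set.range_comp, ← Submodule.map_span, b.span_eq,
    Submodule.map_top, Submodule.range_subtype]

lemma B1_le_Z1 (h00 : (0 : Vk k) ∉ X0)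
    (hX1sub : ∀ W ∈ X1, ∀ x ∈ W, x ≠ 0 → x ∈ X0) : B1 k X0 X1 ≤ Z1 k X0 := by
  rw [B1, Submodule.span_le]
  intro α hα
  obtain ⟨v, x, y, z, -, hz, -, rfl⟩ := exists_walkChain_of_mem_triangleBoundaries hX1sub hα
  exact walkChain_mem_Z1 h00 v (by simp [hz, ZModModule.add_self])

lemma B1_le_comap_phi_imHXt (h00 : (0 : Vk k) ∉ X0)
    (hX1sub : ∀ W ∈ X1, ∀ x ∈ W, x ≠ 0 → x ∈ X0) :
    B1 k X0 X1 ≤ (imHXt k X0 X1).comap (phi k X0) := by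
  rw [B1, Submodule.span_le]
  intro α hα
  obtain ⟨v, x, y, z, hxy, hz, hW, rfl⟩ := exists_walkChain_of_mem_triangleBoundaries hX1sub hα
  exact Submodule.subset_span ⟨_, hW, fun w => by rw [phi_walkChain_triangle h00 v hxy hz]⟩

lemma imHXt_le_map_phi_B1 (h00 : (0 : Vk k) ∉ X0)
    (hX1dim : ∀ W ∈ X1, Module.finrank (ZMod 2) W = 2)
    (hX1sub : ∀ W ∈ X1, ∀ x ∈ W, x ≠ 0 → x ∈ X0) :
    imHXt k X0 X1 ≤ (B1 k X0 X1).map (phi k X0) := by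
  rw [imHXt, Submodule.span_le]
  rintro u ⟨W, hW, hu⟩
  obtain ⟨x, y, hli, rfl⟩ := exists_span_pair_eq_of_finrank_eq_two (hX1dim W hW)
  have hxy : x ≠ y := hli.injective.ne (by decide : (0 : Fin 2) ≠ 1)
  have hx : x ∈ X0 := hX1sub _ hW x (Submodule.subset_span (by simp)) (hli.ne_zero 0)
  have hy : y ∈ X0 := hX1sub _ hW y (Submodule.subset_span (by simp)) (hli.ne_zero 1)
  have hz : x + y ∈ X0 := hX1sub _ hW _
    (add_mem (Submodule.subset_span (by simp)) (Submodule.subset_span (by simp)))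
    (add_ne_zero_of_ne_of_char_two hxy)
  refine ⟨walkChain 0 [⟨x, hx⟩, ⟨x + y, hz⟩, ⟨y, hy⟩], Submodule.subset_span
    ⟨0, x, y, hx, hy, hxy, hW, walkChain_triangle_apply 0 ⟨x, hx⟩ ⟨y, hy⟩ ⟨x + y, hz⟩ rfl⟩, ?_⟩
  rw [phi_walkChain_triangle h00 0 (Subtype.coe_ne_coe.mp hxy) rfl]
  exact funext fun w => (hu w).symm

lemma GXt_phi_eq_zero_of_mem_Z1 (h00 : (0 : Vk k) ∉ X0)
    (hspan : Submodule.span (ZMod 2) (X0 : Set (Vk k)) = ⊤) {γ : C1 k X0} (hγ : γ ∈ Z1 k X0) :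
    GXt k X0 (phi k X0 γ) = 0 := by
  obtain ⟨L, hL, rfl⟩ := Z1_le_closedWalks h00 hspan hγ
  rw [GXt_phi_walkChain, hL]

lemma mem_S1_of_mem_Z1_of_phi_eq_zero (h00 : (0 : Vk k) ∉ X0)
    (hspan : Submodule.span (ZMod 2) (X0 : Set (Vk k)) = ⊤) {γ : C1 k X0} (hγ : γ ∈ Z1 k X0)
    (hφ : phi k X0 γ = 0) : γ ∈ S1 k X0 := by
  obtain ⟨L, -, rfl⟩ := Z1_le_closedWalks h00 hspan hγ
  exact walkChain_mem_S1_of_phi_eq_zero 0 L hφ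

end CayleyComplex

open CayleyComplex

theorem stmt9_general (k : ℕ) (X0 : Finset (Vk k))
    (h00 : (0 : Vk k) ∉ X0)
    (X1 : Set (Submodule (ZMod 2) (Vk k)))
    (hX1dim : ∀ W ∈ X1, Module.finrank (ZMod 2) W = 2)
    (hX1sub : ∀ W ∈ X1, ∀ x ∈ W, x ≠ 0 → x ∈ X0)
    (hspan : Submodule.span (ZMod 2) (X0 : Set (Vk k)) = ⊤) :
    (∀ α ∈ Z1 k X0, phi k X0 α ∈ LinearMap.ker (GXt k X0)) ∧
    (∀ α ∈ B1 k X0 X1 ⊔ S1 k X0, phi k X0 α ∈ imHXt k X0 X1) ∧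
    (∀ α ∈ Z1 k X0, phi k X0 α ∈ imHXt k X0 X1 → α ∈ B1 k X0 X1 ⊔ S1 k X0) ∧
    (∀ u ∈ LinearMap.ker (GXt k X0), ∃ α ∈ Z1 k X0, phi k X0 α - u ∈ imHXt k X0 X1) := by
  refine ⟨fun α hα => GXt_phi_eq_zero_of_mem_Z1 h00 hspan hα, fun α hα => ?_,
    fun α hα hφ => ?_, fun u hu => ?_⟩
  · obtain ⟨β, hβ, σ, hσ, rfl⟩ := Submodule.mem_sup.mp hα
    rw [map_add, S1_le_ker_phi hσ, add_zero]
    exact B1_le_comap_phi_imHXt h00 hX1sub hβ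
  · obtain ⟨β, hβ, hφβ⟩ := imHXt_le_map_phi_B1 h00 hX1dim hX1sub hφ
    have hσ : α - β ∈ S1 k X0 := mem_S1_of_mem_Z1_of_phi_eq_zero h00 hspan
      (sub_mem hα (B1_le_Z1 h00 hX1sub hβ)) (by rw [map_sub, hφβ, sub_self])
    simpa using Submodule.add_mem_sup hβ hσ
  · refine ⟨walkChain 0 (supportWord u), walkChain_mem_Z1 h00 0 ?_, ?_⟩
    · rw [wordSum_supportWord]
      exact hu
    · rw [phi_walkChain_supportWord, sub_self]
      exact zero_mem _

/-- Let `X` be a rank-1 `F₂`-Grassmannian complex with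
`span X(0) = F₂^k` and `Y = Cay(F₂^k, X)`. Then the linear map `φ : Z₁ → F₂^{X(0)}`
satisfies: (i) `φ(Z₁) ⊆ ker G_Xᵀ`; (ii) `φ(B₁ + S₁) ⊆ im H_Xᵀ`; and (iii) the induced
map `Z₁/(B₁+S₁) → ker G_Xᵀ / im H_Xᵀ` is an isomorphism (expressed here by injectivity
and surjectivity modulo the relevant subspaces). In particular
`H₁(Y)/(S₁+B₁) ≅ ker G_Xᵀ / im H_Xᵀ`. -/
theorem stmt9 (k : ℕ) (hk : 1 ≤ k) (X0 : Finset (Vk k))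
    (h00 : (0 : Vk k) ∉ X0)
    (X1 : Set (Submodule (ZMod 2) (Vk k)))
    (hX1dim : ∀ W ∈ X1, Module.finrank (ZMod 2) W = 2)
    (hX1sub : ∀ W ∈ X1, ∀ x ∈ W, x ≠ 0 → x ∈ X0)
    (hspan : Submodule.span (ZMod 2) (X0 : Set (Vk k)) = ⊤) :
    (∀ α ∈ Z1 k X0, phi k X0 α ∈ LinearMap.ker (GXt k X0)) ∧
    (∀ α ∈ B1 k X0 X1 ⊔ S1 k X0, phi k X0 α ∈ imHXt k X0 X1) ∧
    (∀ α ∈ Z1 k X0, phi k X0 α ∈ imHXt k X0 X1 → α ∈ B1 k X0 X1 ⊔ S1 k X0) ∧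
    (∀ u ∈ LinearMap.ker (GXt k X0), ∃ α ∈ Z1 k X0, phi k X0 α - u ∈ imHXt k X0 X1) :=
  stmt9_general k X0 h00 X1 hX1dim hX1sub hspan
end
end

section
/- Let F be a finite field, n ≥ 3, and let R, C ⊆ F^n be subspaces of dimension at most n − 3. Let G be the simple graph whose vertex set is V = {M ∈ F^{n×n} : rank(M) = 1, rowspan(M) ∩ R = {0}, colspan(M) ∩ C = {0}}, with M adjacent to M' if and only if M ≠ M', rank(M + M') = 2, rowspan(M + M') ∩ R = {0}, and colspan(M + M') ∩ C = {0}. Then G is connected and non-bipartite (it contains a closed walk of odd length; equivalently, it is not 2-colorable). -/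
/-!
A vertex is an outer product `x yᵀ` with `x ∉ C` and `y ∉ R`. If `x, x'` are linearly independent
modulo `C` and `y, y'` modulo `R`, then `x yᵀ + x' y'ᵀ` has rank 2, row space `span {y, y'}` and
column space `span {x, x'}`, so `x yᵀ ∼ x' y'ᵀ`. Because `R` and `C` have codimension at least 3,
for any two vertices `x yᵀ`, `x' y'ᵀ` there is `x''` independent modulo `C` of each of `x`, `x'`,
and similarly `y''`; thus any two vertices have the common neighbour `x'' y''ᵀ`. A graph in which
any two vertices have a common neighbour is connected, and a vertex `u`, a neighbour `v` of `u` and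
a common neighbour of `u` and `v` form a triangle.
-/

/-- The row space of a square matrix: the span of its rows. -/
def rowSpace {F : Type*} [Field F] {n : ℕ} (M : Matrix (Fin n) (Fin n) F) :
    Submodule F (Fin n → F) :=
  Submodule.span F (Set.range fun a => M a)

/-- The column space of a square matrix: the span of its columns. -/
def colSpace {F : Type*} [Field F] {n : ℕ} (M : Matrix (Fin n) (Fin n) F) :
    Submodule F (Fin n → F) :=
  Submodule.span F (Set.range fun a => fun b => M b a)

/-- The graph of Statement 15: vertices are the rank-1 matrices in `F^{n×n}` whose row
span meets `R` trivially and whose column span meets `C` trivially; `M ∼ M'` iff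
`M ≠ M'`, `rank(M + M') = 2`, `rowspan(M+M') ∩ R = 0` and `colspan(M+M') ∩ C = 0`. -/
def rank1Graph (F : Type*) [Field F] (n : ℕ) (R C : Submodule F (Fin n → F)) :
    SimpleGraph {M : Matrix (Fin n) (Fin n) F //
      M.rank = 1 ∧ rowSpace M ⊓ R = ⊥ ∧ colSpace M ⊓ C = ⊥} where
  Adj M M' := M ≠ M' ∧ (M.val + M'.val).rank = 2 ∧
    rowSpace (M.val + M'.val) ⊓ R = ⊥ ∧ colSpace (M.val + M'.val) ⊓ C = ⊥
  symm := ⟨by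
    rintro M M' ⟨h1, h2, h3, h4⟩
    exact ⟨Ne.symm h1, by rwa [add_comm], by rwa [add_comm], by rwa [add_comm]⟩⟩
  loopless := ⟨fun M h => h.1 rfl⟩

open Submodule Module Matrix

theorem LinearIndependent.and_disjoint_of_comp_mkQ {R M ι : Type*} [Ring R] [AddCommGroup M]
    [Module R M] {W : Submodule R M} {v : ι → M} (h : LinearIndependent R (W.mkQ ∘ v)) :
    LinearIndependent R v ∧ Disjoint (span R (Set.range v)) W :=
  ⟨h.of_comp _, by simpa using Submodule.range_ker_disjoint h⟩

section Codimension

variable {K V : Type*} [Field K] [AddCommGroup V] [Module K V]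

theorem span_singleton_inf_eq_bot_iff {W : Submodule K V} {x : V} (hx : x ≠ 0) :
    span K {x} ⊓ W = ⊥ ↔ x ∉ W := by
  rw [← disjoint_iff, disjoint_comm, disjoint_span_singleton' hx]

theorem exists_notMem_of_finrank_quotient_pos [FiniteDimensional K V] {W : Submodule K V}
    (h : 0 < finrank K (V ⧸ W)) : ∃ x, x ∉ W := by
  obtain ⟨q, hq⟩ := finrank_pos_iff_exists_ne_zero.mp h
  obtain ⟨x, rfl⟩ := W.mkQ_surjective q
  exact ⟨x, by simpa using hq⟩

theorem exists_linearIndependent_pair_pair (h : 2 < finrank K V) {a b : V} (ha : a ≠ 0)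
    (hb : b ≠ 0) : ∃ c, LinearIndependent K ![a, c] ∧ LinearIndependent K ![b, c] := by
  have hlt : span K (Set.range ![a, b]) < ⊤ :=
    lt_top_of_finrank_lt_finrank ((finrank_range_le_card _).trans_lt (by simpa using h))
  obtain ⟨c, -, hc⟩ := SetLike.exists_of_lt hlt
  have hnot : ∀ d ∈ Set.range ![a, b], ∀ t : K, t • d ≠ c := fun d hd t htd =>
    hc (htd ▸ smul_mem _ t (subset_span hd))
  exact ⟨c, (LinearIndependent.pair_iff' ha).mpr (hnot a (by simp)),
    (LinearIndependent.pair_iff' hb).mpr (hnot b (by simp))⟩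

theorem exists_linearIndependent_mkQ_pair_pair [FiniteDimensional K V] {W : Submodule K V}
    (h : 2 < finrank K (V ⧸ W)) {a b : V} (ha : a ∉ W) (hb : b ∉ W) :
    ∃ c, LinearIndependent K (W.mkQ ∘ ![a, c]) ∧ LinearIndependent K (W.mkQ ∘ ![b, c]) := by
  obtain ⟨q, hac, hbc⟩ := exists_linearIndependent_pair_pair h (a := W.mkQ a) (b := W.mkQ b)
    (by simpa using ha) (by simpa using hb)
  obtain ⟨c, rfl⟩ := W.mkQ_surjective q
  exact ⟨c, FinVec.map_eq W.mkQ ![a, c] ▸ hac, FinVec.map_eq W.mkQ ![b, c] ▸ hbc⟩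

end Codimension

section OuterProducts

variable {F : Type*} [Field F] {l m k ι : Type*} [Fintype m] [Fintype ι]

theorem span_range_row_mul [Fintype l] {A : Matrix l m F} (hA : span F (Set.range A.row) = ⊤)
    (B : Matrix m k F) : span F (Set.range (A * B).row) = span F (Set.range B.row) := by
  rw [← range_vecMulLinear, ← range_vecMulLinear,
    show (A * B).vecMulLinear = B.vecMulLinear ∘ₗ A.vecMulLinear from
      LinearMap.ext fun v => (vecMul_vecMul v A B).symm,
    LinearMap.range_comp, range_vecMulLinear, hA, Submodule.map_top]

theorem span_range_col_eq_top {X : Matrix ι m F} (hX : LinearIndependent F X.row) :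
    span F (Set.range X.col) = ⊤ := by
  apply Submodule.eq_top_of_finrank_eq
  rw [finrank_fintype_fun_eq_card, ← rank_eq_finrank_span_cols, hX.rank_matrix]

theorem sum_vecMulVec_eq_mul (x : ι → l → F) (y : ι → k → F) :
    ∑ i, vecMulVec (x i) (y i) = (of x)ᵀ * of y := by
  ext a b
  simp [mul_apply, vecMulVec_apply, Matrix.sum_apply]

theorem span_range_row_sum_vecMulVec {x : ι → m → F} (hx : LinearIndependent F x)
    (y : ι → k → F) :
    span F (Set.range (∑ i, vecMulVec (x i) (y i)).row) = span F (Set.range y) := by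
  rw [sum_vecMulVec_eq_mul]
  exact span_range_row_mul (span_range_col_eq_top (X := of x) hx) _

end OuterProducts

section RowColSpace

variable {F : Type*} [Field F] {n : ℕ} {ι : Type*} [Fintype ι]

theorem colSpace_eq_rowSpace_transpose (M : Matrix (Fin n) (Fin n) F) :
    colSpace M = rowSpace Mᵀ := rfl

theorem rank_eq_finrank_colSpace (M : Matrix (Fin n) (Fin n) F) :
    M.rank = finrank F (colSpace M) := M.rank_eq_finrank_span_cols

theorem rowSpace_sum_vecMulVec {x : ι → Fin n → F} (hx : LinearIndependent F x)
    (y : ι → Fin n → F) :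
    rowSpace (∑ i, vecMulVec (x i) (y i)) = span F (Set.range y) :=
  span_range_row_sum_vecMulVec hx y

theorem colSpace_sum_vecMulVec (x : ι → Fin n → F) {y : ι → Fin n → F}
    (hy : LinearIndependent F y) :
    colSpace (∑ i, vecMulVec (x i) (y i)) = span F (Set.range x) := by
  rw [colSpace_eq_rowSpace_transpose, transpose_sum]
  simp only [transpose_vecMulVec]
  exact rowSpace_sum_vecMulVec hy x

theorem rank_sum_vecMulVec {x y : ι → Fin n → F} (hx : LinearIndependent F x)
    (hy : LinearIndependent F y) :
    (∑ i, vecMulVec (x i) (y i)).rank = Fintype.card ι := by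
  rw [rank_eq_finrank_colSpace, colSpace_sum_vecMulVec x hy, finrank_span_eq_card hx]

end RowColSpace

section RankOne

variable {F : Type*} [Field F] {n : ℕ}

theorem rowSpace_vecMulVec {x : Fin n → F} (hx : x ≠ 0) (y : Fin n → F) :
    rowSpace (vecMulVec x y) = span F {y} := by
  simpa using
    rowSpace_sum_vecMulVec (x := ![x]) (linearIndependent_unique_iff.mpr (by simpa)) ![y]

theorem colSpace_vecMulVec (x : Fin n → F) {y : Fin n → F} (hy : y ≠ 0) :
    colSpace (vecMulVec x y) = span F {x} := by
  rw [colSpace_eq_rowSpace_transpose, transpose_vecMulVec, rowSpace_vecMulVec hy]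

theorem rank_vecMulVec {x y : Fin n → F} (hx : x ≠ 0) (hy : y ≠ 0) :
    (vecMulVec x y).rank = 1 := by
  simpa using rank_sum_vecMulVec (x := ![x]) (y := ![y])
    (linearIndependent_unique_iff.mpr (by simpa)) (linearIndependent_unique_iff.mpr (by simpa))

theorem exists_vecMulVec_eq_of_rank_eq_one {M : Matrix (Fin n) (Fin n) F} (hM : M.rank = 1) :
    ∃ x y : Fin n → F, vecMulVec x y = M := by
  rw [rank_eq_finrank_colSpace] at hM
  obtain ⟨x, -, hx⟩ := finrank_eq_one_iff'.mp hM
  choose y hy using fun j => hx ⟨M.col j, subset_span ⟨j, rfl⟩⟩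
  refine ⟨x, y, ?_⟩
  ext i j
  simpa [vecMulVec_apply, mul_comm] using congr_fun (congrArg Subtype.val (hy j)) i

end RankOne

namespace SimpleGraph

variable {V : Type*} {G : SimpleGraph V}

theorem connected_of_commonNeighbors_nonempty [Nonempty V]
    (h : ∀ u v, (G.commonNeighbors u v).Nonempty) : G.Connected := by
  refine ⟨fun u v => ?_⟩
  obtain ⟨w, huw, hvw⟩ := h u v
  exact huw.reachable.trans hvw.reachable.symm

theorem not_colorable_two_of_commonNeighbors_nonempty [Nonempty V]
    (h : ∀ u v, (G.commonNeighbors u v).Nonempty) : ¬ G.Colorable 2 := by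
  classical
  intro hc
  obtain ⟨u⟩ := ‹Nonempty V›
  obtain ⟨v, huv, -⟩ := h u u
  obtain ⟨w, huw, hvw⟩ := h u v
  exact hc.cliqueFree (by norm_num : 2 < 3) {u, v, w} (is3Clique_triple_iff.mpr ⟨huv, huw, hvw⟩)

end SimpleGraph

section Rank1Graph

variable {F : Type*} [Field F] {n : ℕ} {R C : Submodule F (Fin n → F)}

abbrev IsRank1Vertex (R C : Submodule F (Fin n → F)) (M : Matrix (Fin n) (Fin n) F) : Prop :=
  M.rank = 1 ∧ rowSpace M ⊓ R = ⊥ ∧ colSpace M ⊓ C = ⊥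

theorem isRank1Vertex_iff {M : Matrix (Fin n) (Fin n) F} :
    IsRank1Vertex R C M ↔ ∃ x y, x ∉ C ∧ y ∉ R ∧ vecMulVec x y = M := by
  constructor
  · rintro ⟨hrank, hrow, hcol⟩
    obtain ⟨x, y, rfl⟩ := exists_vecMulVec_eq_of_rank_eq_one hrank
    have hx : x ≠ 0 := by rintro rfl; simp at hrank
    have hy : y ≠ 0 := by rintro rfl; simp at hrank
    rw [rowSpace_vecMulVec hx, span_singleton_inf_eq_bot_iff hy] at hrow
    rw [colSpace_vecMulVec x hy, span_singleton_inf_eq_bot_iff hx] at hcol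
    exact ⟨x, y, hcol, hrow, rfl⟩
  · rintro ⟨x, y, hxC, hyR, rfl⟩
    have hx : x ≠ 0 := by rintro rfl; exact hxC C.zero_mem
    have hy : y ≠ 0 := by rintro rfl; exact hyR R.zero_mem
    refine ⟨rank_vecMulVec hx hy, ?_, ?_⟩
    · rwa [rowSpace_vecMulVec hx, span_singleton_inf_eq_bot_iff hy]
    · rwa [colSpace_vecMulVec x hy, span_singleton_inf_eq_bot_iff hx]

theorem rank1Graph_adj_of_linearIndependent {A B : {M // IsRank1Vertex R C M}}
    {x x' y y' : Fin n → F}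
    (hA : vecMulVec x y = A.val) (hB : vecMulVec x' y' = B.val)
    (hx : LinearIndependent F (C.mkQ ∘ ![x, x'])) (hy : LinearIndependent F (R.mkQ ∘ ![y, y'])) :
    (rank1Graph F n R C).Adj A B := by
  obtain ⟨hxi, hxC⟩ := hx.and_disjoint_of_comp_mkQ
  obtain ⟨hyi, hyR⟩ := hy.and_disjoint_of_comp_mkQ
  have hsum : A.val + B.val = ∑ i, vecMulVec (![x, x'] i) (![y, y'] i) := by
    simp [← hA, ← hB, Fin.sum_univ_two]
  refine ⟨?_, ?_, ?_, ?_⟩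
  · rintro rfl
    have hspan : span F {x} = span F {x'} := by
      rw [← colSpace_vecMulVec x (by simpa using hyi.ne_zero 0), hA, ← hB,
        colSpace_vecMulVec x' (by simpa using hyi.ne_zero 1)]
    obtain ⟨t, ht⟩ := mem_span_singleton.mp (hspan ▸ mem_span_singleton_self x')
    exact (LinearIndependent.pair_iff' (by simpa using hxi.ne_zero 0)).mp hxi t ht
  · rw [hsum, rank_sum_vecMulVec hxi hyi, Fintype.card_fin]
  · rw [hsum, rowSpace_sum_vecMulVec hxi, ← disjoint_iff]
    exact hyR
  · rw [hsum, colSpace_sum_vecMulVec _ hyi, ← disjoint_iff]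
    exact hxC

theorem rank1Graph_nonempty (hR : 0 < finrank F ((Fin n → F) ⧸ R))
    (hC : 0 < finrank F ((Fin n → F) ⧸ C)) : Nonempty {M // IsRank1Vertex R C M} := by
  obtain ⟨x, hx⟩ := exists_notMem_of_finrank_quotient_pos hC
  obtain ⟨y, hy⟩ := exists_notMem_of_finrank_quotient_pos hR
  exact ⟨⟨vecMulVec x y, isRank1Vertex_iff.mpr ⟨x, y, hx, hy, rfl⟩⟩⟩

theorem rank1Graph_commonNeighbors_nonempty (hR : 2 < finrank F ((Fin n → F) ⧸ R))
    (hC : 2 < finrank F ((Fin n → F) ⧸ C)) (A B : {M // IsRank1Vertex R C M}) :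
    ((rank1Graph F n R C).commonNeighbors A B).Nonempty := by
  obtain ⟨x, y, hx, hy, hA⟩ := isRank1Vertex_iff.mp A.2
  obtain ⟨x', y', hx', hy', hB⟩ := isRank1Vertex_iff.mp B.2
  obtain ⟨x'', hxx'', hx'x''⟩ := exists_linearIndependent_mkQ_pair_pair hC hx hx'
  obtain ⟨y'', hyy'', hy'y''⟩ := exists_linearIndependent_mkQ_pair_pair hR hy hy'
  have hx'' : x'' ∉ C := by simpa using hxx''.ne_zero 1
  have hy'' : y'' ∉ R := by simpa using hyy''.ne_zero 1
  refine ⟨⟨vecMulVec x'' y'', isRank1Vertex_iff.mpr ⟨x'', y'', hx'', hy'', rfl⟩⟩, ?_, ?_⟩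
  · exact rank1Graph_adj_of_linearIndependent hA rfl hxx'' hyy''
  · exact rank1Graph_adj_of_linearIndependent hB rfl hx'x'' hy'y''

end Rank1Graph

theorem two_lt_finrank_quotient {F : Type*} [Field F] {n : ℕ} (hn : 3 ≤ n)
    {W : Submodule F (Fin n → F)} (hW : finrank F W ≤ n - 3) :
    2 < finrank F ((Fin n → F) ⧸ W) := by
  have := W.finrank_quotient_add_finrank
  rw [finrank_fin_fun] at this
  omega

theorem stmt15_general (F : Type*) [Field F] (n : ℕ) (hn : 3 ≤ n)
    (R C : Submodule F (Fin n → F))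
    (hR : Module.finrank F R ≤ n - 3) (hC : Module.finrank F C ≤ n - 3) :
    (rank1Graph F n R C).Connected ∧ ¬ (rank1Graph F n R C).Colorable 2 := by
  have hR' := two_lt_finrank_quotient hn hR
  have hC' := two_lt_finrank_quotient hn hC
  have := rank1Graph_nonempty (zero_lt_two.trans hR') (zero_lt_two.trans hC')
  have hcommon := rank1Graph_commonNeighbors_nonempty hR' hC'
  exact ⟨SimpleGraph.connected_of_commonNeighbors_nonempty hcommon,
    SimpleGraph.not_colorable_two_of_commonNeighbors_nonempty hcommon⟩

/-- Let `F` be a finite field, `n ≥ 3`, and `R, C ⊆ F^n` subspaces of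
dimension at most `n − 3`. Then the graph `rank1Graph F n R C` is connected and
non-bipartite (not 2-colorable). -/
theorem stmt15 (F : Type*) [Field F] [Fintype F] (n : ℕ) (hn : 3 ≤ n)
    (R C : Submodule F (Fin n → F))
    (hR : Module.finrank F R ≤ n - 3) (hC : Module.finrank F C ≤ n - 3) :
    (rank1Graph F n R C).Connected ∧ ¬ (rank1Graph F n R C).Colorable 2 :=
  stmt15_general F n hn R C hR hC
end
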